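/- arXiv:1901.04428 — 7 statements merged into one kernel-verified Lean document; each statement's English description precedes it below -/
import Mathlib

section
/- Let G be a countable group acting faithfully on the right by homeomorphisms on a second countable Hausdorff topological space X, let 𝒰 be a countable base for the topology of X, and let μ be an invariant random subgroup of G. Then for μ-almost every subgroup H ≤ G the following holds: for all U, V ∈ 𝒰 with U ∩ V = ∅ such that some h ∈ H satisfies U·h = V, there exist σ ∈ G with U·σ = V and a finite-index subgroup Γ₀ of the group W = {g ∈ G : x·g = x for all x ∈ U·σ⁻¹, and U·g = U}, such that for every γ ∈ Γ₀ there exists h' ∈ H with U·h' = U and x·h' = x·γ for all x ∈ U. -/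
open MulOpposite MeasureTheory

/-- The σ-algebra on the space of subgroups of `G`, generated by the sets
`{H : g ∈ H}` for `g ∈ G` (the Borel σ-algebra of the Chabauty topology). -/
instance subgroupMeasurableSpace (G : Type*) [Group G] : MeasurableSpace (Subgroup G) :=
  MeasurableSpace.generateFrom {A : Set (Subgroup G) | ∃ g : G, A = {H : Subgroup G | g ∈ H}}

/-- Conjugation `H ↦ g⁻¹ H g` on subgroups. -/
def conjSubgroup {G : Type*} [Group G] (g : G) (H : Subgroup G) : Subgroup G :=
  Subgroup.map (MulAut.conj g⁻¹).toMonoidHom H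

/-- Pointwise stabilizer of a set `A ⊆ X` for a right action of `G` on `X`:
`{g ∈ G : x·g = x for all x ∈ A}`. -/
def pointwiseStabilizer (G : Type*) {X : Type*} [Group G] [MulAction Gᵐᵒᵖ X] (A : Set X) :
    Subgroup G where
  carrier := {g : G | ∀ x ∈ A, op g • x = x}
  one_mem' := by intro x _; simp
  mul_mem' := by
    intro g h hg hh x hx
    have h1 : op (g * h) • x = op h • (op g • x) := by
      rw [op_mul, mul_smul]
    rw [h1, hg x hx, hh x hx]
  inv_mem' := by
    intro g hg x hx
    have h1 : op g⁻¹ • (op g • x) = x := by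
      rw [op_inv]; exact inv_smul_smul _ _
    rw [hg x hx] at h1
    exact h1

/-- Rigid stabilizer `R_G(U) = {g ∈ G : x·g = x for all x ∈ X \ U}`. -/
def rigidStabilizer (G : Type*) {X : Type*} [Group G] [MulAction Gᵐᵒᵖ X] (U : Set X) :
    Subgroup G :=
  pointwiseStabilizer G Uᶜ

/-- The fixed-point set of a subgroup `H` in `X`: `Fix(H) = {x : x·h = x for all h ∈ H}`. -/
def fixedSet (X : Type*) {G : Type*} [Group G] [MulAction Gᵐᵒᵖ X] (H : Subgroup G) : Set X :=
  {x : X | ∀ h ∈ H, op h • x = x}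

/-- Setwise stabilizer `{g ∈ G : U·g = U}`. -/
def setStabilizer (G : Type*) {X : Type*} [Group G] [MulAction Gᵐᵒᵖ X] (U : Set X) :
    Subgroup G where
  carrier := {g : G | (fun x : X => op g • x) '' U = U}
  one_mem' := by
    show (fun x : X => op (1 : G) • x) '' U = U
    simp
  mul_mem' := by
    intro g h hg hh
    show (fun x : X => op (g * h) • x) '' U = U
    have h1 : (fun x : X => op (g * h) • x)
        = (fun x : X => op h • x) ∘ (fun x : X => op g • x) := by
      funext x
      simp [op_mul, mul_smul]
    rw [h1, Set.image_comp, hg, hh]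
  inv_mem' := by
    intro g hg
    show (fun x : X => op g⁻¹ • x) '' U = U
    have h2 : (fun x : X => op g⁻¹ • x) '' ((fun x : X => op g • x) '' U) = U := by
      rw [← Set.image_comp]
      have h3 : ((fun x : X => op g⁻¹ • x) ∘ (fun x : X => op g • x)) = id := by
        funext x
        simp [op_inv]
      rw [h3, Set.image_id]
    rw [hg] at h2
    exact h2

/-!
Fix `U` and `h ∈ H`, and let `W` be the group of the statement for `σ = h`. The elements of `W`
whose action on `U` is realized by an element of `H` stabilizing `U` form a subgroup `K(H)`,
equivariant under conjugation by `W`. If `g ∈ W` conjugates `h` back into `H`, the commutator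
`h⁻¹ (g h g⁻¹) ∈ H` acts on `U` as `g⁻¹`, so `g ∈ K(H)`.

It remains to see that when a countable group `W` preserves a finite measure and an equivariant
family of subgroups `K` contains every element taking a point of `A` back into `A`, then `K ω`
has finite index for a.e. `ω ∈ A`. Enumerate `W` and let `C w` be the set of `ω ∈ A` at which
`w` is the least representative of a nontrivial coset of `K ω`. The translates `C w · w⁻¹` are
pairwise disjoint: a point of two of them gives a return to `A` by `w⁻¹ w'`, along which `K`
does not change, so `w` and `w'` are least representatives of the same coset. Hence
`∑ μ (C w) < ∞`, and by Borel–Cantelli a.e. `ω` lies in only finitely many `C w`.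
-/

open Set Function

namespace Subgroup

variable {G : Type*} [Group G]

lemma mem_conjSubgroup {g x : G} {H : Subgroup G} :
    x ∈ conjSubgroup g H ↔ g * x * g⁻¹ ∈ H := by
  simp only [conjSubgroup, mem_map, MulEquiv.toMonoidHom_eq_coe, MonoidHom.coe_coe,
    MulAut.conj_apply, inv_inv]
  constructor
  · rintro ⟨y, hy, rfl⟩
    simpa [mul_assoc] using hy
  · intro hx
    exact ⟨g * x * g⁻¹, hx, by group⟩

/-- Conjugation `H ↦ g⁻¹Hg` as a right action, so that invariance of an IRS is
`SMulInvariantMeasure Gᵐᵒᵖ (Subgroup G) μ`. -/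
instance conjMulActionOp : MulAction Gᵐᵒᵖ (Subgroup G) where
  smul g H := conjSubgroup g.unop H
  one_smul H := by
    ext x
    change x ∈ conjSubgroup 1 H ↔ _
    simp [mem_conjSubgroup]
  mul_smul a b H := by
    ext x
    change x ∈ conjSubgroup (b.unop * a.unop) H ↔
      x ∈ conjSubgroup a.unop (conjSubgroup b.unop H)
    simp only [mem_conjSubgroup, mul_inv_rev, mul_assoc]

lemma mem_op_smul {g x : G} {H : Subgroup G} : x ∈ op g • H ↔ g * x * g⁻¹ ∈ H :=
  mem_conjSubgroup

lemma op_smul_eq_self_of_mem {g : G} {H : Subgroup G} (hg : g ∈ H) : op g • H = H := by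
  ext x
  rw [mem_op_smul, H.mul_mem_cancel_right (H.inv_mem hg), H.mul_mem_cancel_left hg]

lemma measurableSet_setOf_mem (g : G) : MeasurableSet {H : Subgroup G | g ∈ H} :=
  MeasurableSpace.measurableSet_generateFrom ⟨g, rfl⟩

instance : MeasurableConstSMul Gᵐᵒᵖ (Subgroup G) where
  measurable_const_smul g := by
    refine measurable_generateFrom ?_
    rintro _ ⟨x, rfl⟩
    change MeasurableSet {H : Subgroup G | x ∈ op g.unop • H}
    simp only [mem_op_smul]
    exact measurableSet_setOf_mem _

end Subgroup

section MinCosetRep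

variable {Δ : Type*} [Group Δ] (enc : Δ → ℕ) (L : Subgroup Δ)

def IsMinCosetRep (w : Δ) : Prop :=
  ∀ u, w⁻¹ * u ∈ L → enc w ≤ enc u

variable {enc L}

lemma IsMinCosetRep.eq (henc : Injective enc) {w w' : Δ} (hw : IsMinCosetRep enc L w)
    (hw' : IsMinCosetRep enc L w') (h : w⁻¹ * w' ∈ L) : w = w' :=
  henc <| le_antisymm (hw w' h) (hw' w (by simpa using L.inv_mem h))

variable (enc L) in
lemma exists_isMinCosetRep (g : Δ) : ∃ w, g⁻¹ * w ∈ L ∧ IsMinCosetRep enc L w := by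
  have hg : g ∈ {u | g⁻¹ * u ∈ L} := by simp
  have hmin := argminOn_mem enc _ ⟨g, hg⟩
  refine ⟨_, hmin, fun u hu => argminOn_le enc _ ?_⟩
  simpa [mul_assoc] using L.mul_mem hmin hu

lemma Subgroup.finiteIndex_of_finite_isMinCosetRep
    (hfin : {w | w ∉ L ∧ IsMinCosetRep enc L w}.Finite) : L.FiniteIndex := by
  have : Finite (insert 1 {w | w ∉ L ∧ IsMinCosetRep enc L w} : Set Δ) :=
    (hfin.insert 1).to_subtype
  have hsurj : Surjective fun w : (insert 1 {w | w ∉ L ∧ IsMinCosetRep enc L w} : Set Δ) =>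
      (w : Δ ⧸ L) := by
    rintro ⟨g⟩
    obtain ⟨w, hgw, hw⟩ := exists_isMinCosetRep enc L g
    by_cases hwL : w ∈ L
    · refine ⟨⟨1, mem_insert _ _⟩, QuotientGroup.eq.mpr ?_⟩
      simpa using L.mul_mem hwL (L.inv_mem hgw)
    · exact ⟨⟨w, mem_insert_of_mem _ ⟨hwL, hw⟩⟩, (QuotientGroup.eq.mpr hgw).symm⟩
  have : Finite (Δ ⧸ L) := Finite.of_surjective _ hsurj
  exact Subgroup.finiteIndex_of_finite_quotient

end MinCosetRep

section ReturnsFiniteIndex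

variable {Γ Ω : Type*} [Group Γ] [Countable Γ] [MeasurableSpace Ω] [MulAction Γᵐᵒᵖ Ω]
  [MeasurableConstSMul Γᵐᵒᵖ Ω] {μ : Measure Ω} [IsFiniteMeasure μ] [SMulInvariantMeasure Γᵐᵒᵖ Ω μ]
  {W : Subgroup Γ} {K : Ω → Subgroup Γ} {A : Set Ω}

theorem ae_relIndex_ne_zero_of_returns_mem
    (hK : ∀ γ, MeasurableSet {ω | γ ∈ K ω})
    (hK_smul : ∀ ω, ∀ g ∈ W, K (op g • ω) = op g • K ω)
    (hA : MeasurableSet A) (hAK : ∀ ω ∈ A, ∀ g ∈ W, op g • ω ∈ A → g ∈ K ω) :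
    ∀ᵐ ω ∂μ, ω ∈ A → (K ω).relIndex W ≠ 0 := by
  obtain ⟨enc, henc⟩ := Countable.exists_injective_nat W
  let C : W → Set Ω := fun w =>
    {ω | ω ∈ A ∧ w ∉ (K ω).subgroupOf W ∧ IsMinCosetRep enc ((K ω).subgroupOf W) w}
  have hC : ∀ w, MeasurableSet (C w) := by
    intro w
    simp only [C, IsMinCosetRep, Subgroup.mem_subgroupOf]
    refine measurableSet_setOfPred.mpr <| (measurableSet_setOfPred.mp hA).and <|
      (measurableSet_setOfPred.mp (hK _)).not.and <| .forall fun u => .imp ?_ measurable_const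
    exact measurableSet_setOfPred.mp (hK _)
  have hK_return : ∀ ω ∈ A, ∀ g ∈ W, op g • ω ∈ A → K (op g • ω) = K ω := fun ω hω g hg hgω =>
    (hK_smul ω g hg).trans (Subgroup.op_smul_eq_self_of_mem (hAK ω hω g hg hgω))
  have hdisj : Pairwise (Disjoint on fun w : W => (op (w : Γ) • ·) ⁻¹' C w) := by
    intro w w' hne
    refine disjoint_left.mpr ?_
    rintro ω ⟨hωA, -, hw⟩ ⟨hω'A, -, hw'⟩
    beta_reduce at hωA hw hω'A hw'
    apply hne
    have hε : op ((w⁻¹ * w' : W) : Γ) • op (w : Γ) • ω = op (w' : Γ) • ω := by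
      simp [smul_smul, ← op_mul]
    have hret : op ((w⁻¹ * w' : W) : Γ) • op (w : Γ) • ω ∈ A := hε ▸ hω'A
    rw [← hε, hK_return _ hωA _ (w⁻¹ * w').2 hret] at hw'
    exact hw.eq henc hw' (Subgroup.mem_subgroupOf.mpr (hAK _ hωA _ (w⁻¹ * w').2 hret))
  have hsum : ∑' w, μ (C w) ≠ ⊤ := by
    refine ne_top_of_le_ne_top (measure_ne_top μ (⋃ w : W, (fun ω => op (w : Γ) • ω) ⁻¹' C w)) ?_
    simpa only [measure_preimage_smul] using
      tsum_meas_le_meas_iUnion_of_disjoint μ (fun w => measurable_const_smul _ (hC w)) hdisj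
  filter_upwards [ae_finite_setOfPred_mem hsum] with ω hfin hωA
  have : ((K ω).subgroupOf W).FiniteIndex :=
    Subgroup.finiteIndex_of_finite_isMinCosetRep (enc := enc) <| hfin.subset fun w hw => ⟨hωA, hw⟩
  exact Subgroup.FiniteIndex.index_ne_zero

end ReturnsFiniteIndex

section RealizedOn

variable {G X : Type*} [Group G] [MulAction Gᵐᵒᵖ X] {U : Set X}

lemma smul_mem_of_mem_setStabilizer {g : G} (hg : g ∈ setStabilizer G U) {x : X} (hx : x ∈ U) :
    op g • x ∈ U :=
  (hg : (fun x : X => op g • x) '' U = U) ▸ mem_image_of_mem _ hx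

lemma mem_setStabilizer_of_eq_on {g g' : G} (hg : g ∈ setStabilizer G U)
    (h : ∀ x ∈ U, op g' • x = op g • x) : g' ∈ setStabilizer G U :=
  (image_congr h).trans hg

variable (U) in
def realizedOn (H : Subgroup G) : Subgroup G where
  carrier := {γ | ∃ h ∈ H, h ∈ setStabilizer G U ∧ ∀ x ∈ U, op h • x = op γ • x}
  one_mem' := ⟨1, H.one_mem, (setStabilizer G U).one_mem, fun _ _ => rfl⟩
  mul_mem' := by
    rintro γ₁ γ₂ ⟨h₁, hh₁, hs₁, he₁⟩ ⟨h₂, hh₂, hs₂, he₂⟩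
    refine ⟨h₁ * h₂, H.mul_mem hh₁ hh₂, (setStabilizer G U).mul_mem hs₁ hs₂, fun x hx => ?_⟩
    have hγ₁x : op γ₁ • x ∈ U := he₁ x hx ▸ smul_mem_of_mem_setStabilizer hs₁ hx
    simp only [op_mul, mul_smul]
    rw [he₁ x hx, he₂ _ hγ₁x]
  inv_mem' := by
    rintro γ ⟨h, hh, hs, he⟩
    refine ⟨h⁻¹, H.inv_mem hh, (setStabilizer G U).inv_mem hs, fun x hx => ?_⟩
    have hy := smul_mem_of_mem_setStabilizer ((setStabilizer G U).inv_mem hs) hx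
    have hγy : op γ • op h⁻¹ • x = x := by
      rw [← he _ hy, smul_smul, ← op_mul, inv_mul_cancel, op_one, one_smul]
    rw [← inv_smul_smul (op γ) (op h⁻¹ • x), hγy, op_inv]

lemma conj_mem_realizedOn {H : Subgroup G} {γ g : G} (hγ : γ ∈ realizedOn U H)
    (hg : g ∈ setStabilizer G U) : g⁻¹ * γ * g ∈ realizedOn U (op g • H) := by
  obtain ⟨h, hh, hs, he⟩ := hγ
  refine ⟨g⁻¹ * h * g, ?_, ?_, fun x hx => ?_⟩
  · simpa [Subgroup.mem_op_smul, mul_assoc] using hh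
  · exact (setStabilizer G U).mul_mem ((setStabilizer G U).mul_mem
      ((setStabilizer G U).inv_mem hg) hs) hg
  · have hy := smul_mem_of_mem_setStabilizer ((setStabilizer G U).inv_mem hg) hx
    simp only [op_mul, mul_smul]
    rw [he _ hy]

lemma realizedOn_op_smul {H : Subgroup G} {g : G} (hg : g ∈ setStabilizer G U) :
    realizedOn U (op g • H) = op g • realizedOn U H := by
  ext γ
  rw [Subgroup.mem_op_smul]
  constructor
  · intro hγ
    simpa [smul_smul, ← op_mul] using
      conj_mem_realizedOn hγ ((setStabilizer G U).inv_mem hg)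
  · intro hγ
    simpa [mul_assoc] using conj_mem_realizedOn hγ hg

/-- If `g` fixes `U·h⁻¹` pointwise, the commutator `h⁻¹ (g h g⁻¹)` acts on `U` as `g⁻¹`. -/
lemma mem_realizedOn_of_conj_mem {H : Subgroup G} {g h : G} (hh : h ∈ H)
    (hg : g ∈ pointwiseStabilizer G ((fun x : X => op h⁻¹ • x) '' U) ⊓ setStabilizer G U)
    (hghg : g * h * g⁻¹ ∈ H) : g ∈ realizedOn U H := by
  have hact : ∀ x ∈ U, op (h⁻¹ * (g * h * g⁻¹)) • x = op g⁻¹ • x := by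
    intro x hx
    have hfix : op g • op h⁻¹ • x = op h⁻¹ • x := hg.1 _ (mem_image_of_mem _ hx)
    simp only [op_mul, mul_smul, op_inv] at hfix ⊢
    rw [hfix, smul_inv_smul]
  rw [← inv_mem_iff]
  exact ⟨_, H.mul_mem (H.inv_mem hh) hghg,
    mem_setStabilizer_of_eq_on ((setStabilizer G U).inv_mem hg.2) hact, hact⟩

variable (U) in
lemma measurableSet_setOf_mem_realizedOn [Countable G] (γ : G) :
    MeasurableSet {H : Subgroup G | γ ∈ realizedOn U H} := by
  have : {H : Subgroup G | γ ∈ realizedOn U H} = ⋃ (h : G)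
      (_ : h ∈ setStabilizer G U ∧ ∀ x ∈ U, op h • x = op γ • x), {H | h ∈ H} := by
    ext H
    simp only [mem_iUnion, exists_prop]
    exact exists_congr fun h => by tauto
  rw [this]
  exact .iUnion fun h => .iUnion fun _ => Subgroup.measurableSet_setOf_mem h

end RealizedOn

theorem irs_coset_finite_index_general
    {G X : Type*} [Group G] [Countable G] [MulAction Gᵐᵒᵖ X]
    (𝒰 : Set (Set X))
    (h𝒰c : 𝒰.Countable)
    (μ : Measure (Subgroup G)) [IsProbabilityMeasure μ]
    (hinv : ∀ g : G, ∀ B : Set (Subgroup G), MeasurableSet B →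
      μ ((fun H : Subgroup G => conjSubgroup g H) ⁻¹' B) = μ B) :
    ∀ᵐ H ∂μ, ∀ U ∈ 𝒰, ∀ V ∈ 𝒰, U ∩ V = ∅ →
      (∃ h ∈ H, (fun x : X => op h • x) '' U = V) →
      ∃ σ : G, (fun x : X => op σ • x) '' U = V ∧
        ∃ Γ₀ : Subgroup G,
          Γ₀ ≤ pointwiseStabilizer G ((fun x : X => op σ⁻¹ • x) '' U) ⊓ setStabilizer G U ∧
          Γ₀.relIndex
            (pointwiseStabilizer G ((fun x : X => op σ⁻¹ • x) '' U) ⊓ setStabilizer G U) ≠ 0 ∧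
          ∀ γ ∈ Γ₀, ∃ h' ∈ H, (fun x : X => op h' • x) '' U = U ∧
            ∀ x ∈ U, op h' • x = op γ • x := by
  have : Countable 𝒰 := h𝒰c.to_subtype
  have : SMulInvariantMeasure Gᵐᵒᵖ (Subgroup G) μ := ⟨fun g _ hB => hinv g.unop _ hB⟩
  have hfin : ∀ᵐ H ∂μ, ∀ U : 𝒰, ∀ h : G, h ∈ H → (realizedOn (U : Set X) H).relIndex
      (pointwiseStabilizer G ((fun x : X => op h⁻¹ • x) '' (U : Set X)) ⊓
        setStabilizer G (U : Set X)) ≠ 0 := by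
    refine ae_all_iff.mpr fun U => ae_all_iff.mpr fun h => ?_
    refine ae_relIndex_ne_zero_of_returns_mem (measurableSet_setOf_mem_realizedOn _)
      (fun H g hg => realizedOn_op_smul hg.2) (Subgroup.measurableSet_setOf_mem h) ?_
    exact fun H hH g hg hgH => mem_realizedOn_of_conj_mem hH hg (Subgroup.mem_op_smul.mp hgH)
  filter_upwards [hfin] with H hH
  rintro U hU V - - ⟨h, hhH, rfl⟩
  refine ⟨h, rfl, _ ⊓ realizedOn U H, inf_le_left, ?_, fun γ hγ => hγ.2⟩
  rw [inf_comm, Subgroup.inf_relIndex_right]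
  exact hH ⟨U, hU⟩ h hhH

/-- **Proposition 3.1(i).** Let `G` be a countable group acting faithfully by
homeomorphisms on a second countable Hausdorff space `X` (encoded as a left action of
`Gᵐᵒᵖ`, so `x·g = op g • x`), let `𝒰` be a countable base of the topology and `μ` an
invariant random subgroup of `G`.  Then for `μ`-a.e. `H`: whenever `U, V ∈ 𝒰` are
disjoint and some `h ∈ H` maps `U` onto `V`, there exist `σ ∈ G` mapping `U` onto `V`
and a finite-index subgroup `Γ₀` of `W = {g : g fixes U·σ⁻¹ pointwise and U·g = U}`
such that every `γ ∈ Γ₀` agrees on `U` with some element `h' ∈ H` preserving `U`. -/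
theorem irs_coset_finite_index
    {G X : Type*} [Group G] [Countable G] [TopologicalSpace X]
    [SecondCountableTopology X] [T2Space X] [MulAction Gᵐᵒᵖ X]
    (hcont : ∀ g : G, Continuous fun x : X => op g • x)
    (hfaith : ∀ g : G, (∀ x : X, op g • x = x) → g = 1)
    (𝒰 : Set (Set X)) (h𝒰 : TopologicalSpace.IsTopologicalBasis 𝒰)
    (h𝒰c : 𝒰.Countable)
    (μ : Measure (Subgroup G)) [IsProbabilityMeasure μ]
    (hinv : ∀ g : G, ∀ B : Set (Subgroup G), MeasurableSet B →
      μ ((fun H : Subgroup G => conjSubgroup g H) ⁻¹' B) = μ B) :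
    ∀ᵐ H ∂μ, ∀ U ∈ 𝒰, ∀ V ∈ 𝒰, U ∩ V = ∅ →
      (∃ h ∈ H, (fun x : X => op h • x) '' U = V) →
      ∃ σ : G, (fun x : X => op σ • x) '' U = V ∧
        ∃ Γ₀ : Subgroup G,
          Γ₀ ≤ pointwiseStabilizer G ((fun x : X => op σ⁻¹ • x) '' U) ⊓ setStabilizer G U ∧
          Γ₀.relIndex
            (pointwiseStabilizer G ((fun x : X => op σ⁻¹ • x) '' U) ⊓ setStabilizer G U) ≠ 0 ∧
          ∀ γ ∈ Γ₀, ∃ h' ∈ H, (fun x : X => op h' • x) '' U = U ∧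
            ∀ x ∈ U, op h' • x = op γ • x :=
  irs_coset_finite_index_general 𝒰 h𝒰c μ hinv
end

section
/- Let G be a countable group acting faithfully on the right by homeomorphisms on a second countable Hausdorff topological space X, let 𝒰 be a countable base for the topology of X, and let μ be an invariant random subgroup of G. Then for μ-almost every subgroup H ≤ G the following holds: for all U, V ∈ 𝒰 with U ∩ V = ∅ such that some h ∈ H satisfies U·h = V, the subgroup K = {g ∈ R_G(U) : g⁻¹ R_H(U) g = R_H(U), and there exists h' ∈ H with U·h' = U and x·h' = x·g for all x ∈ U} has finite index in R_G(U); moreover K ∩ H is a normal subgroup of K and the quotient group K/(K ∩ H) is an FC-group, i.e. for every g ∈ K the set of cosets {(k⁻¹gk)(K ∩ H) : k ∈ K} is finite. -/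
open MulOpposite MeasureTheory

/-!
Faithfulness makes an element fixing `U` pointwise commute with `R_G(U)`. Hence if `h' ∈ H`
agrees on `U` with `g ∈ R_G(U)`, conjugation by `h'` and by `g` coincide on `R_G(U)`: so `K`
normalizes `R_H(U) = K ∩ H`, and `[g, s] = [h', s]` for `s ∈ R_G(U)`.

Both finiteness statements come from one principle: if `H ↦ ψ H` picks, measurably in `H` and
equivariantly under conjugation of `H` by `Z H`, a right coset of a subgroup of `Z H`, then for an
IRS this subgroup has finite index in `Z H` almost surely. Indeed, let each `H` send its mass from
the least representative of `ψ H` to the least representatives of all other cosets, along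
conjugation. By invariance a representative sends at most what it receives, and it receives at
most `μ univ`; so by Borel–Cantelli almost every `H` has only finitely many cosets.
For the index of `K` take `Z = R_G(U)` and `ψ H = γ⁻¹ K` for any `γ ∈ R_G(U)` conjugating `h`
into `H`, which does not depend on `γ` because `U·h` is disjoint from `U`. For the FC property
take `Z = N_{R_G(U)}(R_H(U))` and `ψ H = {x ∈ Z : x⁻¹ h' x ∈ H}`; it contains `1`, so its
stabilizer consists of elements `s` with `[h', s] ∈ H`, that is `[g, s] ∈ K ∩ H`.
-/

open Pointwise

section Conjugation

variable {G : Type*} [Group G]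

lemma mem_conjSubgroup {g a : G} {H : Subgroup G} : a ∈ conjSubgroup g H ↔ g * a * g⁻¹ ∈ H := by
  constructor
  · rintro ⟨b, hb, rfl⟩
    simpa [mul_assoc] using hb
  · exact fun ha => ⟨g * a * g⁻¹, ha, by simp [mul_assoc]⟩

lemma conjSubgroup_eq_self_iff {g : G} {L : Subgroup G} :
    conjSubgroup g L = L ↔ g ∈ Subgroup.normalizer (L : Set G) := by
  simp only [SetLike.ext_iff, mem_conjSubgroup, Subgroup.mem_normalizer_iff, Iff.comm]

lemma conjSubgroup_inf (g : G) (A B : Subgroup G) :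
    conjSubgroup g (A ⊓ B) = conjSubgroup g A ⊓ conjSubgroup g B := by
  ext; simp [mem_conjSubgroup]

end Conjugation

section CosetRep

variable {G : Type*} [Group G]

def IsCosetRep (ι : G → ℕ) (L Z : Subgroup G) (g : G) : Prop :=
  g ∈ Z ∧ ∀ g', ι g' < ι g → g' * g⁻¹ ∉ L

variable {ι : G → ℕ} {L Z : Subgroup G}

lemma IsCosetRep.eq_of_mul_inv_mem (hι : ι.Injective) {r₁ r₂ : G} (h₁ : IsCosetRep ι L Z r₁)
    (h₂ : IsCosetRep ι L Z r₂) (h : r₁ * r₂⁻¹ ∈ L) : r₁ = r₂ := by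
  rcases lt_trichotomy (ι r₁) (ι r₂) with hlt | heq | hgt
  · exact absurd h (h₂.2 _ hlt)
  · exact hι heq
  · exact absurd (by simpa using inv_mem h) (h₁.2 _ hgt)

lemma exists_isCosetRep (hLZ : L ≤ Z) {y : G} (hy : y ∈ Z) :
    ∃ r, IsCosetRep ι L Z r ∧ r * y⁻¹ ∈ L := by
  have hne : {r | r * y⁻¹ ∈ L}.Nonempty := ⟨y, by simp⟩
  obtain ⟨r, hr, hmin⟩ := (InvImage.wf ι wellFounded_lt).has_min _ hne
  refine ⟨r, ⟨by simpa using mul_mem (hLZ hr) hy, fun g' hg' hg'L => hmin g' ?_ hg'⟩, hr⟩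
  simpa [mul_assoc] using mul_mem hg'L hr

lemma relIndex_ne_zero_of_finite_isCosetRep (hLZ : L ≤ Z)
    (hfin : {r | IsCosetRep ι L Z r}.Finite) : L.relIndex Z ≠ 0 := by
  have : Finite (Z ⧸ L.subgroupOf Z) := by
    have := hfin.to_subtype
    refine Finite.of_surjective (fun r : {r | IsCosetRep ι L Z r} =>
      (QuotientGroup.mk ⟨r.1⁻¹, inv_mem r.2.1⟩ : Z ⧸ L.subgroupOf Z)) ?_
    rintro ⟨z⟩
    obtain ⟨r, hr, hrz⟩ := exists_isCosetRep hLZ (inv_mem z.2)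
    exact ⟨⟨r, hr⟩, QuotientGroup.eq.2 (by simpa [Subgroup.mem_subgroupOf] using hrz)⟩
  exact Subgroup.index_ne_zero_of_finite

end CosetRep

section FiniteConjugacyClasses

variable {G : Type*} [Group G]

/-- The coset `(k⁻¹ g k) N` only depends on the class of `k` modulo `L`. -/
lemma finite_conj_cosets {K N L : Subgroup G} {g : G} (hKN : K ≤ Subgroup.normalizer (N : Set G))
    (hL : L.relIndex K ≠ 0) (hcomm : ∀ s ∈ K, s ∈ L → g⁻¹ * s⁻¹ * g * s ∈ N) :
    {c : Set G | ∃ k ∈ K, c = (fun y : G => (k⁻¹ * g * k) * y) '' (N : Set G)}.Finite := by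
  have : (L.subgroupOf K).FiniteIndex := ⟨hL⟩
  set f : G → Set G := fun k => (fun y : G => (k⁻¹ * g * k) * y) '' (N : Set G)
  have hf : ∀ k ∈ K, ∀ s ∈ K, s ∈ L → f (s * k) = f k := by
    intro k hk s hsK hsL
    have hn : k⁻¹ * (g⁻¹ * s⁻¹ * g * s) * k ∈ N := by
      simpa using (Subgroup.mem_normalizer_iff.1 (hKN (inv_mem hk)) _).1 (hcomm s hsK hsL)
    calc ((s * k)⁻¹ * g * (s * k)) • (N : Set G)
        = (k⁻¹ * g * k) • (k⁻¹ * (g⁻¹ * s⁻¹ * g * s) * k) • (N : Set G) := by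
          rw [smul_smul]; congr 1; group
      _ = (k⁻¹ * g * k) • (N : Set G) := by rw [leftCoset_mem_leftCoset N hn]
  refine (Set.finite_range fun q : K ⧸ L.subgroupOf K => f (q.out : G)⁻¹).subset ?_
  rintro _ ⟨k, hk, rfl⟩
  obtain ⟨l, hl⟩ := QuotientGroup.mk_out_eq_mul (L.subgroupOf K) ⟨k⁻¹, inv_mem hk⟩
  refine ⟨QuotientGroup.mk ⟨k⁻¹, inv_mem hk⟩, ?_⟩
  simp only [hl, Subgroup.coe_mul, mul_inv_rev, inv_inv]
  exact hf k hk _ (inv_mem l.1.2) (inv_mem (Subgroup.mem_subgroupOf.1 l.2))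

end FiniteConjugacyClasses

section MassTransport

variable {G : Type*} [Group G]

lemma measurable_mem_subgroup (g : G) : Measurable fun H : Subgroup G => g ∈ H :=
  measurableSet_setOfPred.1 (MeasurableSpace.measurableSet_generateFrom ⟨g, rfl⟩)

lemma mem_of_mem_stabilizer {S : Set G} {s : G} (h1 : (1 : G) ∈ S)
    (hs : s ∈ MulAction.stabilizer G S) : s ∈ S := by
  simpa [MulAction.mem_stabilizer_iff.1 hs] using Set.smul_mem_smul_set (a := s) h1

/-- `mul_inv_mul_mem` says that a nonempty `ψ H` is a right coset, of its stabilizer. -/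
structure IsEquivariantCoset (Z : Subgroup G → Subgroup G) (ψ : Subgroup G → Set G) : Prop where
  measurable_mem_ambient : ∀ g, Measurable fun H => g ∈ Z H
  measurable_mem : ∀ g, Measurable fun H => g ∈ ψ H
  subset : ∀ H, ψ H ⊆ Z H
  mul_inv_mul_mem : ∀ H, ∀ a ∈ ψ H, ∀ b ∈ ψ H, ∀ c ∈ ψ H, b * a⁻¹ * c ∈ ψ H
  ambient_conj : ∀ H, ∀ δ ∈ Z H, Z (conjSubgroup δ H) = Z H
  mem_conj : ∀ H, ∀ δ ∈ Z H, ∀ x, x ∈ ψ (conjSubgroup δ H) ↔ x * δ⁻¹ ∈ ψ H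

namespace IsEquivariantCoset

variable {Z : Subgroup G → Subgroup G} {ψ : Subgroup G → Set G} (hψ : IsEquivariantCoset Z ψ)
include hψ

lemma mem_stabilizer_iff {H : Subgroup G} {a s : G} (ha : a ∈ ψ H) :
    s ∈ MulAction.stabilizer G (ψ H) ↔ s * a ∈ ψ H := by
  refine ⟨fun hs => hs ▸ Set.smul_mem_smul_set ha, fun hsa => ?_⟩
  ext c
  rw [Set.mem_smul_set_iff_inv_smul_mem, smul_eq_mul]
  constructor
  · intro hc
    simpa [mul_assoc] using hψ.mul_inv_mul_mem H a ha _ hsa _ hc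
  · intro hc
    simpa [mul_assoc] using hψ.mul_inv_mul_mem H _ hsa a ha _ hc

lemma mul_inv_mem_stabilizer {H : Subgroup G} {a b : G} (ha : a ∈ ψ H) (hb : b ∈ ψ H) :
    b * a⁻¹ ∈ MulAction.stabilizer G (ψ H) :=
  (hψ.mem_stabilizer_iff ha).2 (by simpa using hb)

lemma stabilizer_le {H : Subgroup G} (hne : (ψ H).Nonempty) :
    MulAction.stabilizer G (ψ H) ≤ Z H := by
  obtain ⟨a, ha⟩ := hne
  intro s hs
  simpa using mul_mem (hψ.subset H ((hψ.mem_stabilizer_iff ha).1 hs)) (inv_mem (hψ.subset H ha))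

lemma stabilizer_conj {H : Subgroup G} {δ a : G} (hδ : δ ∈ Z H) (ha : a ∈ ψ H) :
    MulAction.stabilizer G (ψ (conjSubgroup δ H)) = MulAction.stabilizer G (ψ H) := by
  have haδ : a * δ ∈ ψ (conjSubgroup δ H) := by simpa [hψ.mem_conj H δ hδ] using ha
  ext s
  rw [hψ.mem_stabilizer_iff haδ, hψ.mem_stabilizer_iff ha, hψ.mem_conj H δ hδ]
  simp [mul_assoc]

lemma measurable_mem_stabilizer [Countable G] (s : G) :
    Measurable fun H => s ∈ MulAction.stabilizer G (ψ H) := by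
  simp only [MulAction.mem_stabilizer_iff, Set.ext_iff, Set.mem_smul_set_iff_inv_smul_mem]
  exact Measurable.forall fun y => (hψ.measurable_mem _).iff (hψ.measurable_mem y)

lemma measurable_isCosetRep [Countable G] (ι : G → ℕ) (g : G) :
    Measurable fun H => IsCosetRep ι (MulAction.stabilizer G (ψ H)) (Z H) g :=
  (hψ.measurable_mem_ambient g).and <| Measurable.forall fun g' =>
    measurable_const.imp (hψ.measurable_mem_stabilizer (g' * g⁻¹)).not

theorem ae_relIndex_stabilizer_ne_zero [Countable G] {μ : Measure (Subgroup G)} [IsFiniteMeasure μ]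
    (hμ : ∀ g : G, ∀ B : Set (Subgroup G), MeasurableSet B →
      μ ((fun H : Subgroup G => conjSubgroup g H) ⁻¹' B) = μ B) :
    ∀ᵐ H ∂μ, (ψ H).Nonempty → (MulAction.stabilizer G (ψ H)).relIndex (Z H) ≠ 0 := by
  obtain ⟨ι, hι⟩ := exists_injective_nat G
  set Rep : G → Set (Subgroup G) :=
    fun g => {H | IsCosetRep ι (MulAction.stabilizer G (ψ H)) (Z H) g}
  set A : G → Set (Subgroup G) := fun g => {H | g ∈ ψ H} ∩ Rep g
  have hRep : ∀ g, MeasurableSet (Rep g) := fun g =>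
    measurableSet_setOfPred.2 (hψ.measurable_isCosetRep ι g)
  have hA : ∀ g, MeasurableSet (A g) := fun g =>
    (measurableSet_setOfPred.2 (hψ.measurable_mem g)).inter (hRep g)
  -- Conjugation by `g⁻¹ * g'` moves `ψ H` from the coset represented by `g` to the one of `g'`.
  have transport : ∀ g g', μ (A g ∩ Rep g') ≤ μ (A g' ∩ Rep g) := by
    intro g g'
    rw [← hμ (g⁻¹ * g') _ ((hA g').inter (hRep g))]
    refine measure_mono fun H ⟨⟨hg, hgRep⟩, hg'Rep⟩ => ?_
    have hδ : g⁻¹ * g' ∈ Z H := mul_mem (inv_mem (hψ.subset H hg)) hg'Rep.1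
    simp only [Set.mem_preimage, Set.mem_inter_iff, Set.mem_ofPred_eq, Rep, A,
      hψ.mem_conj H _ hδ, hψ.stabilizer_conj hδ hg, hψ.ambient_conj H _ hδ]
    exact ⟨⟨by simpa using hg, hg'Rep⟩, hgRep⟩
  have received : ∀ g, ∑' g', μ (A g' ∩ Rep g) ≠ ⊤ := by
    intro g
    rw [← measure_iUnion ?_ fun g' => (hA g').inter (hRep g)]
    · exact measure_ne_top μ _
    · intro g₁ g₂ hne
      refine Set.disjoint_left.2 fun H ⟨⟨h₁, hRep₁⟩, _⟩ ⟨⟨h₂, hRep₂⟩, _⟩ => hne ?_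
      exact hRep₁.eq_of_mul_inv_mem hι hRep₂ (hψ.mul_inv_mem_stabilizer h₂ h₁)
  have sent : ∀ g, ∀ᵐ H ∂μ, H ∈ A g → {g' | H ∈ Rep g'}.Finite := fun g => by
    filter_upwards [ae_finite_setOfPred_mem
      (ne_top_of_le_ne_top (received g) (ENNReal.tsum_le_tsum (transport g)))] with H hH hAH
    exact hH.subset fun g' hg' => ⟨hAH, hg'⟩
  filter_upwards [ae_all_iff.2 sent] with H hH hne
  obtain ⟨a, ha⟩ := hne
  obtain ⟨g, hgRep, hga⟩ := exists_isCosetRep (ι := ι) (hψ.stabilizer_le ⟨a, ha⟩) (hψ.subset H ha)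
  have hg : g ∈ ψ H := by simpa using (hψ.mem_stabilizer_iff ha).1 hga
  exact relIndex_ne_zero_of_finite_isCosetRep (hψ.stabilizer_le ⟨a, ha⟩) (hH g ⟨hg, hgRep⟩)

end IsEquivariantCoset

end MassTransport

section RightAction

variable {G X : Type*} [Group G] [MulAction Gᵐᵒᵖ X]

lemma mem_pointwiseStabilizer {A : Set X} {g : G} :
    g ∈ pointwiseStabilizer G A ↔ ∀ x ∈ A, op g • x = x := Iff.rfl

lemma pointwiseStabilizer_anti {A B : Set X} (hAB : A ⊆ B) :
    pointwiseStabilizer G B ≤ pointwiseStabilizer G A :=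
  fun _ hg x hx => hg x (hAB hx)

lemma pointwiseStabilizer_smul (w : G) (A : Set X) :
    pointwiseStabilizer G (op w • A) = conjSubgroup w (pointwiseStabilizer G A) := by
  ext p
  rw [← Set.image_smul]
  simp only [mem_conjSubgroup, mem_pointwiseStabilizer, Set.forall_mem_image, op_mul, op_inv,
    mul_smul, inv_smul_eq_iff]

lemma smul_mem_of_mem_pointwiseStabilizer_compl {A : Set X} {c : G}
    (hc : c ∈ pointwiseStabilizer G Aᶜ) {x : X} (hx : x ∈ A) : op c • x ∈ A := by
  by_contra h
  exact h (by rwa [(smul_left_cancel_iff _).1 (hc _ h)])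

lemma smul_set_eq_of_mem_pointwiseStabilizer_compl {A : Set X} {c : G}
    (hc : c ∈ pointwiseStabilizer G Aᶜ) : op c • A = A := by
  refine (Set.smul_set_subset_iff.2 fun x hx =>
    smul_mem_of_mem_pointwiseStabilizer_compl hc hx).antisymm
    (Set.subset_smul_set_iff.2 <| Set.smul_set_subset_iff.2 fun x hx => ?_)
  simpa [op_inv] using smul_mem_of_mem_pointwiseStabilizer_compl (inv_mem hc) hx

lemma smul_set_eq_of_mem_rigidStabilizer {U : Set X} {g : G} (hg : g ∈ rigidStabilizer G U) :
    op g • U = U :=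
  smul_set_eq_of_mem_pointwiseStabilizer_compl hg

lemma smul_set_eq_of_mem_pointwiseStabilizer {U : Set X} {p : G}
    (hp : p ∈ pointwiseStabilizer G U) : op p • U = U := by
  rw [← compl_inj_iff, ← Set.smul_set_compl]
  exact smul_set_eq_of_mem_pointwiseStabilizer_compl (by rwa [compl_compl])

lemma mem_normalizer_pointwiseStabilizer {A : Set X} {w : G} (hw : op w • A = A) :
    w ∈ Subgroup.normalizer (pointwiseStabilizer G A : Set G) := by
  rw [← conjSubgroup_eq_self_iff, ← pointwiseStabilizer_smul, hw]

lemma mem_normalizer_rigidStabilizer {U : Set X} {w : G} (hw : op w • U = U) :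
    w ∈ Subgroup.normalizer (rigidStabilizer G U : Set G) :=
  mem_normalizer_pointwiseStabilizer (by rw [Set.smul_set_compl, hw])

lemma conj_mem_pointwiseStabilizer {U : Set X} {g p : G} (hg : g ∈ rigidStabilizer G U)
    (hp : p ∈ pointwiseStabilizer G U) : g * p * g⁻¹ ∈ pointwiseStabilizer G U :=
  (Subgroup.mem_normalizer_iff.1
    (mem_normalizer_pointwiseStabilizer (smul_set_eq_of_mem_rigidStabilizer hg)) p).1 hp

lemma commute_of_mem_pointwiseStabilizer_compl [FaithfulSMul Gᵐᵒᵖ X] {A : Set X} {p c : G}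
    (hp : p ∈ pointwiseStabilizer G A) (hc : c ∈ pointwiseStabilizer G Aᶜ) : Commute p c := by
  refine op_injective (eq_of_smul_eq_smul fun x : X => ?_)
  simp only [op_mul, mul_smul]
  by_cases hx : x ∈ A
  · rw [hp x hx, hp _ (smul_mem_of_mem_pointwiseStabilizer_compl hc hx)]
  · have hp' : p ∈ pointwiseStabilizer G Aᶜᶜ := by rwa [compl_compl]
    rw [hc x hx, hc _ (smul_mem_of_mem_pointwiseStabilizer_compl hp' hx)]

lemma faithfulSMul_of_forall_eq_one (hfaith : ∀ g : G, (∀ x : X, op g • x = x) → g = 1) :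
    FaithfulSMul Gᵐᵒᵖ X := by
  refine ⟨fun {m₁ m₂} h => ?_⟩
  have := hfaith (unop (m₂⁻¹ * m₁)) fun x => by simp [mul_smul, h]
  simpa [inv_mul_eq_one, eq_comm] using congrArg op this

end RightAction

section Realized

variable {G X : Type*} [Group G] [MulAction Gᵐᵒᵖ X]

lemma mul_inv_mem_pointwiseStabilizer_iff {U : Set X} {w g : G} :
    w * g⁻¹ ∈ pointwiseStabilizer G U ↔ ∀ x ∈ U, op w • x = op g • x := by
  refine forall₂_congr fun x _ => ?_
  rw [op_mul, op_inv, mul_smul, inv_smul_eq_iff, eq_comm]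

/-- The subgroup `K` of the statement (see `mul_inv_mem_pointwiseStabilizer_iff`). -/
def realizedRigidStabilizer (H : Subgroup G) (U : Set X) : Subgroup G where
  carrier := {g | g ∈ rigidStabilizer G U ∧ ∃ w ∈ H, w * g⁻¹ ∈ pointwiseStabilizer G U}
  one_mem' := ⟨one_mem _, 1, one_mem _, by simp [one_mem]⟩
  mul_mem' := by
    rintro g₁ g₂ ⟨hg₁, w₁, hw₁, hp₁⟩ ⟨hg₂, w₂, hw₂, hp₂⟩
    refine ⟨mul_mem hg₁ hg₂, w₁ * w₂, mul_mem hw₁ hw₂, ?_⟩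
    convert mul_mem hp₁ (conj_mem_pointwiseStabilizer hg₁ hp₂) using 1
    group
  inv_mem' := by
    rintro g ⟨hg, w, hw, hp⟩
    refine ⟨inv_mem hg, w⁻¹, inv_mem hw, ?_⟩
    convert conj_mem_pointwiseStabilizer (inv_mem hg) (inv_mem hp) using 1
    group

variable {H : Subgroup G} {U : Set X}

lemma mem_realizedRigidStabilizer {g : G} : g ∈ realizedRigidStabilizer H U ↔
    g ∈ rigidStabilizer G U ∧ ∃ w ∈ H, w * g⁻¹ ∈ pointwiseStabilizer G U := Iff.rfl

lemma realizedRigidStabilizer_le : realizedRigidStabilizer H U ≤ rigidStabilizer G U :=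
  fun _ hg => hg.1

lemma realizedRigidStabilizer_inf_self :
    realizedRigidStabilizer H U ⊓ H = H ⊓ rigidStabilizer G U := by
  ext g
  simp only [Subgroup.mem_inf, mem_realizedRigidStabilizer]
  exact ⟨fun ⟨⟨hg, _⟩, hgH⟩ => ⟨hgH, hg⟩, fun ⟨hgH, hg⟩ => ⟨⟨hg, g, hgH, by simp [one_mem]⟩, hgH⟩⟩

lemma smul_set_eq_of_mul_inv_mem {w g : G} (hg : g ∈ rigidStabilizer G U)
    (hwg : w * g⁻¹ ∈ pointwiseStabilizer G U) : op w • U = U := by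
  rw [show w = w * g⁻¹ * g by group, op_mul, mul_smul, smul_set_eq_of_mem_pointwiseStabilizer hwg,
    smul_set_eq_of_mem_rigidStabilizer hg]

lemma inv_mul_mul_eq_of_mul_inv_mem [FaithfulSMul Gᵐᵒᵖ X] {w g c : G}
    (hwg : w * g⁻¹ ∈ pointwiseStabilizer G U) (hc : c ∈ rigidStabilizer G U) :
    w⁻¹ * c * w = g⁻¹ * c * g := by
  have hcomm := (commute_of_mem_pointwiseStabilizer_compl hwg hc).eq
  calc w⁻¹ * c * w = g⁻¹ * (w * g⁻¹)⁻¹ * (c * (w * g⁻¹)) * g := by group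
    _ = g⁻¹ * c * g := by rw [← hcomm]; group

lemma realizedRigidStabilizer_le_normalizer [FaithfulSMul Gᵐᵒᵖ X] :
    realizedRigidStabilizer H U ≤
      Subgroup.normalizer ((H ⊓ rigidStabilizer G U : Subgroup G) : Set G) := by
  rw [Subgroup.le_normalizer_iff]
  intro k hk c hc
  obtain ⟨hcH, hcR⟩ := Subgroup.mem_inf.1 hc
  obtain ⟨-, w, hw, hwk⟩ := inv_mem hk
  have hkR := realizedRigidStabilizer_le hk
  refine Subgroup.mem_inf.2 ⟨?_, mul_mem (mul_mem hkR hcR) (inv_mem hkR)⟩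
  have hconj := inv_mul_mul_eq_of_mul_inv_mem hwk hcR
  rw [inv_inv] at hconj
  exact hconj ▸ mul_mem (mul_mem (inv_mem hw) hcH) hw

lemma coe_realizedRigidStabilizer [FaithfulSMul Gᵐᵒᵖ X] :
    (realizedRigidStabilizer H U : Set G) = {g : G | g ∈ rigidStabilizer G U ∧
      conjSubgroup g (H ⊓ rigidStabilizer G U) = H ⊓ rigidStabilizer G U ∧
      ∃ h' ∈ H, (fun x : X => op h' • x) '' U = U ∧ ∀ x ∈ U, op h' • x = op g • x} := by
  ext g
  simp only [SetLike.mem_coe, Set.mem_ofPred_eq, Set.image_smul, conjSubgroup_eq_self_iff,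
    ← mul_inv_mem_pointwiseStabilizer_iff]
  refine ⟨fun hg => ?_, fun ⟨hgR, _, w, hw, _, hwg⟩ => ⟨hgR, w, hw, hwg⟩⟩
  have hgN := realizedRigidStabilizer_le_normalizer hg
  obtain ⟨hgR, w, hw, hwg⟩ := hg
  exact ⟨hgR, hgN, w, hw, smul_set_eq_of_mul_inv_mem hgR hwg, hwg⟩

lemma mem_realizedRigidStabilizer_conjSubgroup {δ g : G} (hδ : δ ∈ rigidStabilizer G U) :
    g ∈ realizedRigidStabilizer (conjSubgroup δ H) U ↔
      δ * g * δ⁻¹ ∈ realizedRigidStabilizer H U := by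
  rw [mem_realizedRigidStabilizer, mem_realizedRigidStabilizer,
    Subgroup.mem_normalizer_iff.1 (Subgroup.le_normalizer hδ) g]
  refine and_congr_right fun _ => ⟨fun ⟨w, hw, hwg⟩ => ⟨δ * w * δ⁻¹, mem_conjSubgroup.1 hw, ?_⟩,
    fun ⟨w, hw, hwg⟩ => ⟨δ⁻¹ * w * δ, mem_conjSubgroup.2 (by group; exact hw), ?_⟩⟩
  · convert conj_mem_pointwiseStabilizer hδ hwg using 1
    group
  · convert conj_mem_pointwiseStabilizer (inv_mem hδ) hwg using 1
    group

lemma measurable_mem_realizedRigidStabilizer [Countable G] (U : Set X) (g : G) :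
    Measurable fun H : Subgroup G => g ∈ realizedRigidStabilizer H U :=
  measurable_const.and <|
    Measurable.exists fun w => (measurable_mem_subgroup w).and measurable_const

end Realized

section FiniteIndex

variable {G X : Type*} [Group G] [MulAction Gᵐᵒᵖ X] {h : G} {U : Set X}

lemma conj_mem_pointwiseStabilizer_of_disjoint (hdisj : Disjoint U (op h • U)) {β : G}
    (hβ : β ∈ rigidStabilizer G U) : h⁻¹ * β * h ∈ pointwiseStabilizer G U := by
  refine pointwiseStabilizer_anti (Set.subset_compl_iff_disjoint_right.2 hdisj) ?_
  rw [← Set.smul_set_compl, pointwiseStabilizer_smul, mem_conjSubgroup]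
  rwa [show h * (h⁻¹ * β * h) * h⁻¹ = β by group]

lemma mul_inv_mem_realizedRigidStabilizer (hdisj : Disjoint U (op h • U)) {H : Subgroup G}
    {γ₁ γ₂ : G} (hγ₁ : γ₁ ∈ rigidStabilizer G U) (hγ₂ : γ₂ ∈ rigidStabilizer G U)
    (h₁ : γ₁ * h * γ₁⁻¹ ∈ H) (h₂ : γ₂ * h * γ₂⁻¹ ∈ H) :
    γ₂ * γ₁⁻¹ ∈ realizedRigidStabilizer H U := by
  refine ⟨mul_mem hγ₂ (inv_mem hγ₁), (γ₂ * h * γ₂⁻¹)⁻¹ * (γ₁ * h * γ₁⁻¹),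
    mul_mem (inv_mem h₂) h₁, ?_⟩
  convert conj_mem_pointwiseStabilizer hγ₂
    (conj_mem_pointwiseStabilizer_of_disjoint hdisj (mul_mem (inv_mem hγ₂) hγ₁)) using 1
  group

variable (h U) in
/-- By `mul_inv_mem_realizedRigidStabilizer`, this is the left coset `γ⁻¹ K` for any
`γ ∈ R_G(U)` with `γ h γ⁻¹ ∈ H`, when `U` and `U·h` are disjoint. -/
def displacementCoset (H : Subgroup G) : Set G :=
  {x | ∃ γ ∈ rigidStabilizer G U, γ * h * γ⁻¹ ∈ H ∧ γ * x ∈ realizedRigidStabilizer H U}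

lemma isEquivariantCoset_displacementCoset [Countable G] (hdisj : Disjoint U (op h • U)) :
    IsEquivariantCoset (fun _ => rigidStabilizer G U) (displacementCoset h U) where
  measurable_mem_ambient _ := measurable_const
  measurable_mem x := Measurable.exists fun γ => measurable_const.and <|
    (measurable_mem_subgroup _).and (measurable_mem_realizedRigidStabilizer U _)
  subset H x := by
    rintro ⟨γ, hγ, -, hγx⟩
    simpa using mul_mem (inv_mem hγ) (realizedRigidStabilizer_le hγx)
  mul_inv_mul_mem H a := by
    rintro ⟨γa, hγa, hha, ha⟩ b ⟨γb, hγb, hhb, hb⟩ c ⟨γc, hγc, hhc, hc⟩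
    refine ⟨γa, hγa, hha, ?_⟩
    have hab := mul_inv_mem_realizedRigidStabilizer hdisj hγb hγa hhb hha
    have hac := mul_inv_mem_realizedRigidStabilizer hdisj hγc hγa hhc hha
    convert mul_mem (mul_mem (mul_mem hab hb) (inv_mem ha)) (mul_mem hac hc) using 1
    group
  ambient_conj _ _ _ := rfl
  mem_conj H δ hδ x := by
    constructor
    · rintro ⟨γ, hγ, hhγ, hγx⟩
      refine ⟨δ * γ, mul_mem hδ hγ, ?_, ?_⟩
      · simpa [mem_conjSubgroup, mul_assoc] using hhγ
      · simpa [mem_realizedRigidStabilizer_conjSubgroup hδ, mul_assoc] using hγx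
    · rintro ⟨γ, hγ, hhγ, hγx⟩
      refine ⟨δ⁻¹ * γ, mul_mem (inv_mem hδ) hγ, ?_, ?_⟩
      · simpa [mem_conjSubgroup, mul_assoc] using hhγ
      · simpa [mem_realizedRigidStabilizer_conjSubgroup hδ, mul_assoc] using hγx

theorem ae_relIndex_realizedRigidStabilizer_ne_zero [Countable G] {μ : Measure (Subgroup G)}
    [IsFiniteMeasure μ] (hμ : ∀ g : G, ∀ B : Set (Subgroup G), MeasurableSet B →
      μ ((fun H : Subgroup G => conjSubgroup g H) ⁻¹' B) = μ B)
    (hdisj : Disjoint U (op h • U)) :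
    ∀ᵐ H ∂μ, h ∈ H → (realizedRigidStabilizer H U).relIndex (rigidStabilizer G U) ≠ 0 := by
  filter_upwards [(isEquivariantCoset_displacementCoset hdisj).ae_relIndex_stabilizer_ne_zero hμ]
    with H hH hh
  have h1 : (1 : G) ∈ displacementCoset h U H :=
    ⟨1, one_mem _, by simpa using hh, by simp [one_mem]⟩
  refine ne_zero_of_dvd_ne_zero (hH ⟨1, h1⟩) (Subgroup.relIndex_dvd_of_le_left _ fun s hs => ?_)
  obtain ⟨γ, hγ, hhγ, hγs⟩ := mem_of_mem_stabilizer h1 hs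
  have hγK : γ ∈ realizedRigidStabilizer H U := by
    simpa using mul_inv_mem_realizedRigidStabilizer hdisj (one_mem _) hγ (by simpa using hh) hhγ
  simpa using mul_mem (inv_mem hγK) hγs

end FiniteIndex

section FCQuotient

variable {G X : Type*} [Group G] [MulAction Gᵐᵒᵖ X] {w : G} {U : Set X}

variable (U) in
def rigidNormalizer (H : Subgroup G) : Subgroup G :=
  Subgroup.normalizer ((H ⊓ rigidStabilizer G U : Subgroup G) : Set G) ⊓ rigidStabilizer G U

variable (w U) in
def conjugatorsInto (H : Subgroup G) : Set G :=
  {x | x ∈ rigidNormalizer U H ∧ x⁻¹ * w * x ∈ H}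

lemma measurable_mem_rigidNormalizer [Countable G] (U : Set X) (x : G) :
    Measurable fun H : Subgroup G => x ∈ rigidNormalizer U H := by
  simp only [rigidNormalizer, Subgroup.mem_inf, Subgroup.mem_normalizer_iff]
  exact (Measurable.forall fun n => ((measurable_mem_subgroup n).and measurable_const).iff
    ((measurable_mem_subgroup _).and measurable_const)).and measurable_const

lemma rigidNormalizer_conjSubgroup {H : Subgroup G} {δ : G} (hδ : δ ∈ rigidNormalizer U H) :
    rigidNormalizer U (conjSubgroup δ H) = rigidNormalizer U H := by
  obtain ⟨hδN, hδR⟩ := Subgroup.mem_inf.1 hδ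
  have hinf : conjSubgroup δ H ⊓ rigidStabilizer G U = H ⊓ rigidStabilizer G U := by
    conv_lhs => rw [← conjSubgroup_eq_self_iff.2 (Subgroup.le_normalizer hδR)]
    rw [← conjSubgroup_inf, conjSubgroup_eq_self_iff.2 hδN]
  rw [rigidNormalizer, rigidNormalizer, hinf]

lemma inv_mul_inv_mul_mem_rigidStabilizer (hw : op w • U = U) {a b : G}
    (ha : a ∈ rigidStabilizer G U) (hb : b ∈ rigidStabilizer G U) :
    (a⁻¹ * w * a)⁻¹ * (b⁻¹ * w * b) ∈ rigidStabilizer G U := by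
  have := (Subgroup.mem_normalizer_iff.1 (inv_mem (mem_normalizer_rigidStabilizer hw)) _).1
    (mul_mem ha (inv_mem hb))
  convert mul_mem (mul_mem (inv_mem ha) this) hb using 1
  group

lemma isEquivariantCoset_conjugatorsInto [Countable G] (hw : op w • U = U) :
    IsEquivariantCoset (rigidNormalizer U) (conjugatorsInto w U) where
  measurable_mem_ambient := measurable_mem_rigidNormalizer U
  measurable_mem x := (measurable_mem_rigidNormalizer U x).and (measurable_mem_subgroup _)
  subset _ _ hx := hx.1
  mul_inv_mul_mem H a ha b hb c hc := by
    obtain ⟨⟨-, haR⟩, haH⟩ := And.imp_left Subgroup.mem_inf.1 ha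
    obtain ⟨⟨-, hbR⟩, hbH⟩ := And.imp_left Subgroup.mem_inf.1 hb
    refine ⟨mul_mem (mul_mem hb.1 (inv_mem ha.1)) hc.1, ?_⟩
    have hab : (a⁻¹ * w * a)⁻¹ * (b⁻¹ * w * b) ∈ H ⊓ rigidStabilizer G U :=
      Subgroup.mem_inf.2 ⟨mul_mem (inv_mem haH) hbH, inv_mul_inv_mul_mem_rigidStabilizer hw haR hbR⟩
    have hac := (Subgroup.mem_inf.1 (inv_mem (mul_mem (inv_mem ha.1) hc.1))).1
    have := (Subgroup.mem_inf.1 ((Subgroup.mem_normalizer_iff.1 hac _).1 hab)).1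
    convert mul_mem hc.2 this using 1
    group
  ambient_conj _ _ hδ := rigidNormalizer_conjSubgroup hδ
  mem_conj H δ hδ x := by
    simp only [conjugatorsInto, Set.mem_ofPred_eq, rigidNormalizer_conjSubgroup hδ,
      mem_conjSubgroup]
    refine and_congr ⟨fun hx => mul_mem hx (inv_mem hδ), fun hx => by simpa using mul_mem hx hδ⟩ ?_
    simp [mul_assoc]

theorem ae_relIndex_stabilizer_conjugatorsInto_ne_zero [Countable G] {μ : Measure (Subgroup G)}
    [IsFiniteMeasure μ] (hμ : ∀ g : G, ∀ B : Set (Subgroup G), MeasurableSet B →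
      μ ((fun H : Subgroup G => conjSubgroup g H) ⁻¹' B) = μ B)
    (hw : op w • U = U) :
    ∀ᵐ H ∂μ, w ∈ H →
      (MulAction.stabilizer G (conjugatorsInto w U H)).relIndex (rigidNormalizer U H) ≠ 0 := by
  filter_upwards [(isEquivariantCoset_conjugatorsInto hw).ae_relIndex_stabilizer_ne_zero hμ]
    with H hH hwH
  exact hH ⟨1, one_mem _, by simpa using hwH⟩

theorem finite_conj_cosets_realizedRigidStabilizer [FaithfulSMul Gᵐᵒᵖ X] {H : Subgroup G} {g : G}
    (hg : g ∈ realizedRigidStabilizer H U) (hwH : w ∈ H)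
    (hwg : w * g⁻¹ ∈ pointwiseStabilizer G U)
    (hL : (MulAction.stabilizer G (conjugatorsInto w U H)).relIndex (rigidNormalizer U H) ≠ 0) :
    {c : Set G | ∃ k ∈ realizedRigidStabilizer H U, c = (fun y : G => (k⁻¹ * g * k) * y) ''
      ((realizedRigidStabilizer H U ⊓ H : Subgroup G) : Set G)}.Finite := by
  have hKN : realizedRigidStabilizer H U ≤ rigidNormalizer U H :=
    le_inf realizedRigidStabilizer_le_normalizer realizedRigidStabilizer_le
  have hgR := realizedRigidStabilizer_le hg
  rw [realizedRigidStabilizer_inf_self]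
  refine finite_conj_cosets realizedRigidStabilizer_le_normalizer
    (mt (Subgroup.relIndex_eq_zero_of_le_right hKN) hL) fun s hsK hsL => ?_
  have hsR := realizedRigidStabilizer_le hsK
  have h1 : (1 : G) ∈ conjugatorsInto w U H := ⟨one_mem _, by simpa using hwH⟩
  have hs : s⁻¹ * w * s ∈ H := (mem_of_mem_stabilizer h1 hsL).2
  refine Subgroup.mem_inf.2 ⟨?_, mul_mem (mul_mem (mul_mem (inv_mem hgR) (inv_mem hsR)) hgR) hsR⟩
  rw [← inv_mul_mul_eq_of_mul_inv_mem hwg (inv_mem hsR)]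
  convert mul_mem (inv_mem hwH) hs using 1
  group

end FCQuotient

theorem irs_normalizer_fc_quotient_general
    {G X : Type*} [Group G] [Countable G] [MulAction Gᵐᵒᵖ X]
    (hfaith : ∀ g : G, (∀ x : X, op g • x = x) → g = 1)
    (𝒰 : Set (Set X)) (h𝒰c : 𝒰.Countable)
    (μ : Measure (Subgroup G)) [IsProbabilityMeasure μ]
    (hinv : ∀ g : G, ∀ B : Set (Subgroup G), MeasurableSet B →
      μ ((fun H : Subgroup G => conjSubgroup g H) ⁻¹' B) = μ B) :
    ∀ᵐ H ∂μ, ∀ U ∈ 𝒰, ∀ V ∈ 𝒰, U ∩ V = ∅ →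
      (∃ h ∈ H, (fun x : X => op h • x) '' U = V) →
      ∃ K : Subgroup G,
        (K : Set G) = {g : G | g ∈ rigidStabilizer G U ∧
            conjSubgroup g (H ⊓ rigidStabilizer G U) = H ⊓ rigidStabilizer G U ∧
            ∃ h' ∈ H, (fun x : X => op h' • x) '' U = U ∧
              ∀ x ∈ U, op h' • x = op g • x} ∧
        K ≤ rigidStabilizer G U ∧
        K.relIndex (rigidStabilizer G U) ≠ 0 ∧
        ((K ⊓ H).subgroupOf K).Normal ∧
        ∀ g ∈ K, {c : Set G | ∃ k ∈ K,
          c = (fun y : G => (k⁻¹ * g * k) * y) '' ((K ⊓ H : Subgroup G) : Set G)}.Finite := by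
  have := faithfulSMul_of_forall_eq_one hfaith
  have hindex : ∀ᵐ H ∂μ, ∀ U ∈ 𝒰, ∀ h : G, Disjoint U (op h • U) → h ∈ H →
      (realizedRigidStabilizer H U).relIndex (rigidStabilizer G U) ≠ 0 := by
    refine (ae_ball_iff h𝒰c).2 fun U _ => ae_all_iff.2 fun h => ?_
    exact Filter.eventually_imp_distrib_left.2 (ae_relIndex_realizedRigidStabilizer_ne_zero hinv)
  have hcosets : ∀ᵐ H ∂μ, ∀ U ∈ 𝒰, ∀ w : G, op w • U = U → w ∈ H →
      (MulAction.stabilizer G (conjugatorsInto w U H)).relIndex (rigidNormalizer U H) ≠ 0 := by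
    refine (ae_ball_iff h𝒰c).2 fun U _ => ae_all_iff.2 fun w => ?_
    exact Filter.eventually_imp_distrib_left.2 (ae_relIndex_stabilizer_conjugatorsInto_ne_zero hinv)
  filter_upwards [hindex, hcosets] with H hindex hcosets U hU V _ hUV hV
  obtain ⟨h, hh, rfl⟩ := hV
  refine ⟨realizedRigidStabilizer H U, coe_realizedRigidStabilizer, realizedRigidStabilizer_le,
    hindex U hU h (Set.disjoint_iff_inter_eq_empty.2 hUV) hh, ?_, fun g hg => ?_⟩
  · rw [Subgroup.normal_subgroupOf_iff_le_normalizer inf_le_left, realizedRigidStabilizer_inf_self]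
    exact realizedRigidStabilizer_le_normalizer
  · obtain ⟨w, hw, hwg⟩ := (mem_realizedRigidStabilizer.1 hg).2
    exact finite_conj_cosets_realizedRigidStabilizer hg hw hwg
      (hcosets U hU w (smul_set_eq_of_mul_inv_mem (realizedRigidStabilizer_le hg) hwg) hw)

/-- **Proposition 3.1(ii).** Let `G` be a countable group acting faithfully by
homeomorphisms on a second countable Hausdorff space `X` (encoded as a left action of
`Gᵐᵒᵖ`, so `x·g = op g • x`), let `𝒰` be a countable base of the topology and `μ` an
invariant random subgroup of `G`.  Then for `μ`-a.e. `H`: whenever `U, V ∈ 𝒰` are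
disjoint and some `h ∈ H` maps `U` onto `V`, the set
`K = {g ∈ R_G(U) : g normalizes R_H(U) and g agrees on U with some h' ∈ H preserving U}`
is (the carrier of) a finite-index subgroup of `R_G(U)`, `K ∩ H` is normal in `K`, and
the quotient `K/(K ∩ H)` is an FC-group (every `g ∈ K` has only finitely many cosets
`(k⁻¹gk)(K ∩ H)`, `k ∈ K`). -/
theorem irs_normalizer_fc_quotient
    {G X : Type*} [Group G] [Countable G] [TopologicalSpace X]
    [SecondCountableTopology X] [T2Space X] [MulAction Gᵐᵒᵖ X]
    (hcont : ∀ g : G, Continuous fun x : X => op g • x)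
    (hfaith : ∀ g : G, (∀ x : X, op g • x = x) → g = 1)
    (𝒰 : Set (Set X)) (h𝒰 : TopologicalSpace.IsTopologicalBasis 𝒰)
    (h𝒰c : 𝒰.Countable)
    (μ : Measure (Subgroup G)) [IsProbabilityMeasure μ]
    (hinv : ∀ g : G, ∀ B : Set (Subgroup G), MeasurableSet B →
      μ ((fun H : Subgroup G => conjSubgroup g H) ⁻¹' B) = μ B) :
    ∀ᵐ H ∂μ, ∀ U ∈ 𝒰, ∀ V ∈ 𝒰, U ∩ V = ∅ →
      (∃ h ∈ H, (fun x : X => op h • x) '' U = V) →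
      ∃ K : Subgroup G,
        (K : Set G) = {g : G | g ∈ rigidStabilizer G U ∧
            conjSubgroup g (H ⊓ rigidStabilizer G U) = H ⊓ rigidStabilizer G U ∧
            ∃ h' ∈ H, (fun x : X => op h' • x) '' U = U ∧
              ∀ x ∈ U, op h' • x = op g • x} ∧
        K ≤ rigidStabilizer G U ∧
        K.relIndex (rigidStabilizer G U) ≠ 0 ∧
        ((K ⊓ H).subgroupOf K).Normal ∧
        ∀ g ∈ K, {c : Set G | ∃ k ∈ K,
          c = (fun y : G => (k⁻¹ * g * k) * y) '' ((K ⊓ H : Subgroup G) : Set G)}.Finite :=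
  irs_normalizer_fc_quotient_general hfaith 𝒰 h𝒰c μ hinv
end

section
/- Let G be a countable group acting faithfully on the right by homeomorphisms on a second countable Hausdorff topological space X, and let μ be an invariant random subgroup of G. Suppose an open set U ⊆ X has the property that there is an infinite simple subgroup A ≤ R_G(U) such that every finite-index subgroup of R_G(U) contains A. Then μ-almost every subgroup H ≤ G has the following property: if H contains an element g such that U ∩ (U·g) = ∅, then A ≤ H. -/
/-!
Fix `g` with `U ∩ U·g = ∅`. Then `g⁻¹ A g ≤ R_G(U·g)` commutes elementwise with `A ≤ R_G(U)`,
which makes the conjugation action of `A` on subgroups rigid along the event `g ∈ H`: if also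
`g ∈ a H a⁻¹` with `a ∈ A`, then `a` normalizes `H ∩ A`; and if `H ∩ A = 1` and `g` lies in
`u H u⁻¹`, `a H a⁻¹` and `(ua) H (ua)⁻¹`, then `a` commutes with `u`. Hence the return times to
each of the events making up `{H : g ∈ H, A ≰ H}` lie in the normalizer of a proper nontrivial
subgroup of `A`, in the centralizer of a nontrivial element, or in the trivial subgroup, all of
infinite index in the infinite simple group `A`. Such an event is null for a measure-preserving
action of a countable group: its translates by `m` elements from distinct cosets are disjoint
(after localizing to invariant pieces), so its measure is at most `1/m`.
-/

open MulOpposite MeasureTheory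

open Function
open scoped Pointwise commutatorElement

namespace IsSimpleGroup

open Subgroup

variable {Γ : Type*} [Group Γ] [IsSimpleGroup Γ] [Infinite Γ]

theorem eq_top_of_index_ne_zero {K : Subgroup Γ} (hK : K.index ≠ 0) : K = ⊤ := by
  have : K.FiniteIndex := ⟨hK⟩
  rcases K.normalCore_normal.eq_bot_or_eq_top with h | h
  · have := (h ▸ K.finiteIndex_normalCore).index_ne_zero
    simp [index_bot] at this
  · exact top_le_iff.mp (h ▸ K.normalCore_le)

theorem index_normalizer_eq_zero {K : Subgroup Γ} (hbot : K ≠ ⊥) (htop : K ≠ ⊤) :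
    (normalizer (K : Set Γ)).index = 0 := by
  by_contra h
  exact (normalizer_eq_top_iff.mp (eq_top_of_index_ne_zero h)).eq_bot_or_eq_top.elim hbot htop

theorem center_eq_bot : center Γ = ⊥ := by
  refine (center Γ).normal_of_characteristic.eq_bot_or_eq_top.resolve_right fun h => ?_
  let := Group.commGroupOfCenterEqTop h
  exact (CommGroup.is_simple_iff_prime_card.mp ‹_›).ne_zero Nat.card_eq_zero_of_infinite

theorem index_centralizer_eq_zero {u : Γ} (hu : u ≠ 1) : (centralizer {u}).index = 0 := by
  by_contra h
  have := centralizer_eq_top_iff_subset.mp (eq_top_of_index_ne_zero h)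
  simp only [center_eq_bot, Set.singleton_subset_iff, coe_bot, Set.mem_singleton_iff] at this
  exact hu this

end IsSimpleGroup

theorem Subgroup.exists_pairwise_inv_mul_notMem_of_index_eq_zero {Γ : Type*} [Group Γ]
    {K : Subgroup Γ} (hK : K.index = 0) (m : ℕ) :
    ∃ t : Fin m → Γ, Pairwise fun i j => (t i)⁻¹ * t j ∉ K := by
  have : Infinite (Γ ⧸ K) := by
    by_contra h
    exact (Subgroup.index_ne_zero_iff_finite.mpr (not_infinite_iff_finite.mp h)) hK
  let e := Infinite.natEmbedding (Γ ⧸ K)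
  refine ⟨fun i => (e i).out, fun i j hij hK => hij (Fin.val_injective (e.injective ?_))⟩
  simpa using QuotientGroup.eq.mpr hK

section Recurrence

variable {Γ Ω : Type*} [Group Γ] [MulAction Γ Ω] [MeasurableSpace Ω] [MeasurableConstSMul Γ Ω]
  {μ : Measure Ω} [SMulInvariantMeasure Γ Ω μ]

theorem nat_mul_measure_le_of_pairwise_disjoint_smul {E S : Set Ω} (hE : MeasurableSet E)
    (hES : E ⊆ S) (hS : ∀ (γ : Γ) ω, γ • ω ∈ S ↔ ω ∈ S) {m : ℕ} {t : Fin m → Γ}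
    (ht : Pairwise (Disjoint on fun i => t i • E)) : m * μ E ≤ μ S := by
  calc m * μ E = μ (⋃ i, t i • E) := by
        rw [measure_iUnion ht fun i => hE.const_smul _]; simp [measure_smul]
    _ ≤ μ S := measure_mono <| Set.iUnion_subset fun i => Set.smul_set_subset_iff.mpr
        fun ω hω => (hS _ _).mpr (hES hω)

theorem nat_mul_measure_le_of_forall_pairwise_disjoint_smul {B : Set Ω} (hB : MeasurableSet B)
    {S : ℕ → Set Ω} (hSm : ∀ k, MeasurableSet (S k)) (hS : ∀ k (γ : Γ) ω, γ • ω ∈ S k ↔ ω ∈ S k)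
    (hBS : B ⊆ ⋃ k, S k) {m : ℕ}
    (ht : ∀ k, ∃ t : Fin m → Γ, Pairwise (Disjoint on fun i => t i • (B ∩ S k))) :
    m * μ B ≤ μ Set.univ := by
  have hD : ∀ k (γ : Γ) ω, γ • ω ∈ disjointed S k ↔ ω ∈ disjointed S k := fun k =>
    disjointedRec (p := fun T => ∀ (γ : Γ) ω, γ • ω ∈ T ↔ ω ∈ T)
      (fun T i hT γ ω => by simp [hT, hS]) (hS k)
  have hBD : B = ⋃ k, B ∩ disjointed S k := by
    rw [← Set.inter_iUnion, iUnion_disjointed, Set.inter_eq_left.mpr hBS]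
  calc m * μ B = ∑' k, m * μ (B ∩ disjointed S k) := by
        conv_lhs => rw [hBD]
        rw [measure_iUnion (fun k l hkl => ((disjoint_disjointed S hkl).mono
          Set.inter_subset_right Set.inter_subset_right)) fun k => hB.inter (.disjointed hSm k),
          ENNReal.tsum_mul_left]
    _ ≤ ∑' k, μ (disjointed S k) := ENNReal.tsum_le_tsum fun k => by
        obtain ⟨t, ht⟩ := ht k
        refine nat_mul_measure_le_of_pairwise_disjoint_smul (hB.inter (.disjointed hSm k))
          Set.inter_subset_right (hD k) (t := t) fun i j hij => (ht hij).mono ?_ ?_ <;>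
        exact Set.smul_set_mono (Set.inter_subset_inter_right _ (disjointed_subset S k))
    _ = μ (⋃ k, disjointed S k) := (measure_iUnion (disjoint_disjointed S) (.disjointed hSm)).symm
    _ ≤ μ Set.univ := measure_mono (Set.subset_univ _)

theorem measure_eq_zero_of_returns_mem_index_eq_zero [Countable Γ] [IsFiniteMeasure μ] {B : Set Ω}
    (hB : MeasurableSet B)
    (hN : ∀ ω ∈ B, ∃ N : Subgroup Γ, N.index = 0 ∧ ∀ γ : Γ, γ • ω ∈ B → γ ∈ N) :
    μ B = 0 := by
  suffices h : ∀ m : ℕ, m * μ B ≤ μ Set.univ by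
    by_contra hB0
    obtain ⟨m, hm⟩ := ENNReal.exists_nat_mul_gt hB0 (measure_ne_top μ Set.univ)
    exact (h m).not_gt hm
  intro m
  -- The translates of `B ∩ Good t` by the `t i` are pairwise disjoint, and `Good t` is
  -- invariant because its definition only involves the orbit of `ω`.
  let Good (t : Fin m → Γ) : Set Ω :=
    {ω | ∀ γ : Γ, γ • ω ∈ B → Pairwise fun i j => ((t i)⁻¹ * t j * γ) • ω ∉ B}
  have hGood_smul (t) (ρ : Γ) (ω : Ω) : ρ • ω ∈ Good t ↔ ω ∈ Good t := by
    simp only [Good, Set.mem_ofPred_eq, smul_smul, mul_assoc]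
    exact (Equiv.mulRight ρ).forall_congr fun _ => Iff.rfl
  have hGood_meas (t) : MeasurableSet (Good t) := by
    have hB' (γ : Γ) : Measurable fun ω : Ω => γ • ω ∈ B := hB.mem.comp (measurable_const_smul γ)
    exact measurableSet_setOfPred.mpr (by unfold Pairwise; fun_prop)
  have hcover : B ⊆ ⋃ t, Good t := fun ω hω => by
    obtain ⟨N, hN0, hret⟩ := hN ω hω
    obtain ⟨t, ht⟩ := Subgroup.exists_pairwise_inv_mul_notMem_of_index_eq_zero hN0 m
    refine Set.mem_iUnion.mpr ⟨t, fun γ hγ i j hij hij' => ht hij ?_⟩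
    exact (Subgroup.mul_mem_cancel_right _ (hret γ hγ)).mp (hret _ hij')
  obtain ⟨e, he⟩ := exists_surjective_nat (Fin m → Γ)
  refine nat_mul_measure_le_of_forall_pairwise_disjoint_smul hB (fun k => hGood_meas (e k))
    (fun k => hGood_smul (e k)) (he.iUnion_comp Good ▸ hcover) fun k => ⟨e k, fun i j hij => ?_⟩
  refine Set.disjoint_left.mpr ?_
  rintro _ ⟨ω, ⟨hωB, hωG⟩, rfl⟩ ⟨ω', ⟨hω'B, -⟩, hω'⟩
  refine hωG 1 (by simpa using hωB) hij.symm ?_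
  rwa [mul_one, mul_smul, ← show e k j • ω' = e k i • ω from hω', inv_smul_smul]

end Recurrence

abbrev Subgroup.conjMulAction {G : Type*} [Group G] : MulAction G (Subgroup G) :=
  MulAction.compHom _ (ConjAct.toConjAct : G ≃* ConjAct G).toMonoidHom

attribute [local instance] Subgroup.conjMulAction

namespace Subgroup

variable {G : Type*} [Group G]

theorem mem_conj_smul_iff {g x : G} {H : Subgroup G} : x ∈ g • H ↔ g⁻¹ * x * g ∈ H := by
  change x ∈ ConjAct.toConjAct g • H ↔ _
  rw [mem_pointwise_smul_iff_inv_smul_mem, ConjAct.smul_def]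
  simp

theorem conjSubgroup_eq_inv_smul (g : G) (H : Subgroup G) : conjSubgroup g H = g⁻¹ • H := by
  ext x
  rw [mem_conj_smul_iff, inv_inv, conjSubgroup, mem_map_equiv]
  simp

@[fun_prop]
theorem measurable_mem (g : G) : Measurable fun H : Subgroup G => g ∈ H :=
  measurableSet_setOfPred.mp (MeasurableSpace.measurableSet_generateFrom ⟨g, rfl⟩)

theorem measurable_of_forall_measurable_mem {α : Type*} [MeasurableSpace α] {f : α → Subgroup G}
    (hf : ∀ g : G, Measurable fun a => g ∈ f a) : Measurable f :=
  measurable_generateFrom fun _ ⟨g, hg⟩ => hg ▸ measurableSet_setOfPred.mpr (hf g)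

instance : MeasurableConstSMul G (Subgroup G) where
  measurable_const_smul g := measurable_of_forall_measurable_mem fun x => by
    simp only [mem_conj_smul_iff]; fun_prop

instance [Countable G] : MeasurableSingletonClass (Subgroup G) where
  measurableSet_singleton K := by
    change MeasurableSet {H | H = K}
    simp only [SetLike.ext_iff]
    exact measurableSet_setOfPred.mpr (by fun_prop)

@[fun_prop]
theorem measurable_subgroupOf (A : Subgroup G) : Measurable fun H : Subgroup G => H.subgroupOf A :=
  measurable_of_forall_measurable_mem fun x => by simp only [mem_subgroupOf]; fun_prop

end Subgroup

section RigidStabilizer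

variable {G X : Type*} [Group G] [MulAction Gᵐᵒᵖ X]

theorem commute_of_mem_rigidStabilizer_of_disjoint [FaithfulSMul Gᵐᵒᵖ X] {U V : Set X}
    (hUV : Disjoint U V) {a c : G} (ha : a ∈ rigidStabilizer G U)
    (hc : c ∈ rigidStabilizer G V) : Commute a c := by
  have hd : (MulAction.toPerm (op a) : Equiv.Perm X).Disjoint (MulAction.toPerm (op c)) :=
    fun x => by
      by_cases hx : x ∈ U
      · exact Or.inr (hc x (Set.disjoint_left.mp hUV hx))
      · exact Or.inl (ha x hx)
  have h : op a * op c = op c * op a := eq_of_smul_eq_smul (α := X) fun x => by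
    rw [mul_smul, mul_smul]
    exact congrArg (· x) hd.commute.eq
  exact op_injective h.symm

theorem conj_mem_rigidStabilizer_smul {U : Set X} {y : G} (hy : y ∈ rigidStabilizer G U)
    (g : G) : g⁻¹ * y * g ∈ rigidStabilizer G (op g • U) := fun z hz => by
  have hz' : op g⁻¹ • z ∉ U := fun h =>
    hz (Set.mem_smul_set_iff_inv_smul_mem.mpr (by simpa using h))
  rw [op_mul, op_mul, mul_smul, mul_smul, hy _ hz', op_inv, smul_inv_smul]

end RigidStabilizer

section ConjugateCommuting

variable {G : Type*} [Group G] {A H : Subgroup G} {g : G}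

theorem mem_iff_conj_mem_of_inv_conj_mem (hgA : ∀ x ∈ A, ∀ y ∈ A, Commute x (g⁻¹ * y * g))
    {a x : G} (ha : a ∈ A) (hx : x ∈ A) (hg : g ∈ H) (hga : a⁻¹ * g * a ∈ H) :
    x ∈ H ↔ a * x * a⁻¹ ∈ H := by
  have hc := (hgA _ (A.mul_mem (A.mul_mem ha hx) (A.inv_mem ha)) _ (A.inv_mem ha)).eq
  have hconj : (g⁻¹ * (a⁻¹ * g * a)) * x * (g⁻¹ * (a⁻¹ * g * a))⁻¹ = a * x * a⁻¹ :=
    calc _ = (g⁻¹ * a⁻¹ * g) * (a * x * a⁻¹) * (g⁻¹ * a⁻¹ * g)⁻¹ := by group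
      _ = a * x * a⁻¹ := by rw [← hc]; group
  rw [← hconj]
  exact Subgroup.mem_normalizer_iff.mp (Subgroup.le_normalizer (mul_mem (inv_mem hg) hga)) x

theorem commutatorElement_inv_mem (hgA : ∀ x ∈ A, ∀ y ∈ A, Commute x (g⁻¹ * y * g))
    {a u : G} (ha : a ∈ A) (hu : u ∈ A) (hg : g ∈ H) (hga : a⁻¹ * g * a ∈ H)
    (hgu : u⁻¹ * g * u ∈ H) (hgua : (u * a)⁻¹ * g * (u * a) ∈ H) : ⁅u⁻¹, a⁻¹⁆ ∈ H := by
  have hc := (hgA _ (A.inv_mem ha) u hu).eq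
  have key : (g⁻¹ * (u⁻¹ * g * u))⁻¹ * (g⁻¹ * (a⁻¹ * g * a))⁻¹ *
      (g⁻¹ * ((u * a)⁻¹ * g * (u * a))) = ⁅u⁻¹, a⁻¹⁆ :=
    calc _ = u⁻¹ * (a⁻¹ * (g⁻¹ * u * g)) * (g⁻¹ * u⁻¹ * g) * u * a := by rw [hc]; group
      _ = ⁅u⁻¹, a⁻¹⁆ := by rw [commutatorElement_def]; group
  rw [← key]
  exact mul_mem (mul_mem (inv_mem (mul_mem (inv_mem hg) hgu)) (inv_mem (mul_mem (inv_mem hg) hga)))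
    (mul_mem (inv_mem hg) hgua)

end ConjugateCommuting

section InvariantRandomSubgroup

open Subgroup

variable {G : Type*} [Group G] [Countable G] {μ : Measure (Subgroup G)} [IsFiniteMeasure μ]
  [SMulInvariantMeasure G (Subgroup G) μ] {A : Subgroup G} [Infinite A] {g : G}

theorem measure_setOf_mem_forall_notMem_smul :
    μ {H | g ∈ H ∧ ∀ u : A, u ≠ 1 → g ∉ u • H} = 0 := by
  refine measure_eq_zero_of_returns_mem_index_eq_zero (Γ := A) (measurableSet_setOfPred.mpr ?_) ?_
  · have (u : A) : Measurable fun H : Subgroup G => g ∈ u • H :=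
      (measurable_mem g).comp (measurable_const_smul u)
    fun_prop
  · rintro H ⟨-, hH⟩
    refine ⟨⊥, by simp [index_bot], fun u hu => ?_⟩
    by_contra hu1
    exact hH u (by simpa using hu1) hu.1

variable [IsSimpleGroup A]

theorem measure_setOf_mem_subgroupOf_ne_bot_ne_top
    (hgA : ∀ x ∈ A, ∀ y ∈ A, Commute x (g⁻¹ * y * g)) :
    μ {H | g ∈ H ∧ H.subgroupOf A ≠ ⊥ ∧ H.subgroupOf A ≠ ⊤} = 0 := by
  refine measure_eq_zero_of_returns_mem_index_eq_zero (Γ := A) (measurableSet_setOfPred.mpr ?_) ?_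
  · fun_prop
  · rintro H ⟨hg, hbot, htop⟩
    refine ⟨_, IsSimpleGroup.index_normalizer_eq_zero hbot htop, fun a ha => ?_⟩
    refine mem_normalizer_iff.mpr fun x => ?_
    simp only [mem_subgroupOf, coe_mul, coe_inv]
    exact mem_iff_conj_mem_of_inv_conj_mem hgA a.2 x.2 hg (mem_conj_smul_iff.mp ha.1)

theorem measure_setOf_mem_subgroupOf_eq_bot_mem_smul
    (hgA : ∀ x ∈ A, ∀ y ∈ A, Commute x (g⁻¹ * y * g)) {u : A} (hu : u ≠ 1) :
    μ {H | g ∈ H ∧ H.subgroupOf A = ⊥ ∧ g ∈ u • H} = 0 := by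
  refine measure_eq_zero_of_returns_mem_index_eq_zero (Γ := A) (measurableSet_setOfPred.mpr ?_) ?_
  · have : Measurable fun H : Subgroup G => g ∈ u • H :=
      (measurable_mem g).comp (measurable_const_smul u)
    fun_prop
  · rintro H ⟨hg, hbot, hgu⟩
    refine ⟨_, IsSimpleGroup.index_centralizer_eq_zero hu, fun a ha => ?_⟩
    obtain ⟨hga, -, hgua⟩ := ha
    rw [smul_smul] at hgua
    have hcomm : ⁅u⁻¹, a⁻¹⁆ ∈ H.subgroupOf A := by
      rw [mem_subgroupOf]
      exact commutatorElement_inv_mem hgA a.2 u.2 hg (mem_conj_smul_iff.mp hga)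
        (mem_conj_smul_iff.mp hgu) (mem_conj_smul_iff.mp hgua)
    rw [hbot, mem_bot, commutatorElement_eq_one_iff_commute, Commute.inv_inv_iff] at hcomm
    exact mem_centralizer_singleton_iff.mpr hcomm.eq.symm

theorem measure_setOf_mem_not_le (hgA : ∀ x ∈ A, ∀ y ∈ A, Commute x (g⁻¹ * y * g)) :
    μ {H | g ∈ H ∧ ¬ A ≤ H} = 0 := by
  refine measure_mono_null (fun H ⟨hg, hA⟩ => ?_) <| measure_union_null
    (measure_union_null (measure_setOf_mem_subgroupOf_ne_bot_ne_top hgA)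
      (measure_setOf_mem_forall_notMem_smul (A := A) (g := g)))
    (measure_iUnion_null fun (u : A) => measure_iUnion_null fun (hu : u ≠ 1) =>
      measure_setOf_mem_subgroupOf_eq_bot_mem_smul hgA hu)
  by_cases hbot : H.subgroupOf A = ⊥
  · by_cases hret : ∃ u : A, u ≠ 1 ∧ g ∈ u • H
    · obtain ⟨u, hu, hgu⟩ := hret
      exact Or.inr (Set.mem_iUnion₂.mpr ⟨u, hu, hg, hbot, hgu⟩)
    · exact Or.inl (Or.inr ⟨hg, fun u hu hgu => hret ⟨u, hu, hgu⟩⟩)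
  · exact Or.inl (Or.inl ⟨hg, hbot, by rwa [Ne, subgroupOf_eq_top]⟩)

end InvariantRandomSubgroup

theorem irs_contains_simple_subgroup_general
    {G X : Type*} [Group G] [Countable G] [MulAction Gᵐᵒᵖ X]
    (hfaith : ∀ g : G, (∀ x : X, op g • x = x) → g = 1)
    (U : Set X)
    (A : Subgroup G) (hAinf : Infinite A) (hAsimple : IsSimpleGroup A)
    (hAle : A ≤ rigidStabilizer G U)
    (μ : Measure (Subgroup G)) [IsProbabilityMeasure μ]
    (hinv : ∀ g : G, ∀ B : Set (Subgroup G), MeasurableSet B →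
      μ ((fun H : Subgroup G => conjSubgroup g H) ⁻¹' B) = μ B) :
    ∀ᵐ H ∂μ, (∃ g ∈ H, U ∩ ((fun x : X => op g • x) '' U) = ∅) → A ≤ H := by
  have : FaithfulSMul Gᵐᵒᵖ X := ⟨fun {k l} h => mul_inv_eq_one.mp <| unop_injective <|
    hfaith _ fun x => by rw [op_unop, mul_smul, h, smul_inv_smul]⟩
  have : SMulInvariantMeasure G (Subgroup G) μ := ⟨fun g S hS => by
    simpa only [Subgroup.conjSubgroup_eq_inv_smul, inv_inv] using hinv g⁻¹ S hS⟩
  have hgA (g : G) (hg : U ∩ op g • U = ∅) : ∀ x ∈ A, ∀ y ∈ A, Commute x (g⁻¹ * y * g) :=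
    fun x hx y hy => commute_of_mem_rigidStabilizer_of_disjoint
      (Set.disjoint_iff_inter_eq_empty.mpr hg) (hAle hx) (conj_mem_rigidStabilizer_smul (hAle hy) g)
  rw [ae_iff]
  refine measure_mono_null (fun H hH => ?_) (measure_iUnion_null fun (g : G) =>
    measure_iUnion_null fun (hg : U ∩ op g • U = ∅) => measure_setOf_mem_not_le (hgA g hg))
  obtain ⟨⟨g, hgH, hg⟩, hA⟩ := Classical.not_imp.mp hH
  exact Set.mem_iUnion₂.mpr ⟨g, hg, hgH, hA⟩

/-- **Corollary 3.3.** Let `G` be a countable group acting faithfully by homeomorphisms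
on a second countable Hausdorff space `X` (encoded as a left action of `Gᵐᵒᵖ`, so
`x·g = op g • x`), and let `μ` be an invariant random subgroup of `G`.  Suppose the open
set `U` admits an infinite simple subgroup `A ≤ R_G(U)` contained in every finite-index
subgroup of `R_G(U)`.  Then for `μ`-a.e. `H`: if some `g ∈ H` satisfies `U ∩ U·g = ∅`,
then `A ≤ H`. -/
theorem irs_contains_simple_subgroup
    {G X : Type*} [Group G] [Countable G] [TopologicalSpace X]
    [SecondCountableTopology X] [T2Space X] [MulAction Gᵐᵒᵖ X]
    (hcont : ∀ g : G, Continuous fun x : X => op g • x)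
    (hfaith : ∀ g : G, (∀ x : X, op g • x = x) → g = 1)
    (U : Set X) (hU : IsOpen U)
    (A : Subgroup G) (hAinf : Infinite A) (hAsimple : IsSimpleGroup A)
    (hAle : A ≤ rigidStabilizer G U)
    (hAfi : ∀ K : Subgroup G, K ≤ rigidStabilizer G U →
      K.relIndex (rigidStabilizer G U) ≠ 0 → A ≤ K)
    (μ : Measure (Subgroup G)) [IsProbabilityMeasure μ]
    (hinv : ∀ g : G, ∀ B : Set (Subgroup G), MeasurableSet B →
      μ ((fun H : Subgroup G => conjSubgroup g H) ⁻¹' B) = μ B) :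
    ∀ᵐ H ∂μ, (∃ g ∈ H, U ∩ ((fun x : X => op g • x) '' U) = ∅) → A ≤ H :=
  irs_contains_simple_subgroup_general hfaith U A hAinf hAsimple hAle μ hinv
end

section
/- Let G be a countable group acting faithfully on the right by homeomorphisms on a second countable Hausdorff topological space X, let U ⊆ X be an open subset with complement U^c = X \ U, and let H ≤ G be a subgroup. Let L = {h ∈ H : U·h = U}; every element of L preserves both U and U^c, so restriction gives group homomorphisms ρ_U : L → Sym(U) and ρ_{U^c} : L → Sym(U^c) into the groups of bijections of U and of U^c. Then ρ_{U^c}(R_H(U^c)) is a normal subgroup of ρ_{U^c}(L), ρ_U(R_H(U)) is a normal subgroup of ρ_U(L), and there is a group isomorphism ρ_{U^c}(L)/ρ_{U^c}(R_H(U^c)) ≅ ρ_U(L)/ρ_U(R_H(U)). -/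
/-!
Restricting `L = {h ∈ H : U·h = U}` to `U` and to `Uᶜ` gives two homomorphisms `ρ_U` and
`ρ_{Uᶜ}` out of `L` whose kernels are `R_H(Uᶜ)` and `R_H(U)` respectively. For any two
homomorphisms `φ`, `ψ` out of a group `L`, both `φ(L) / φ(ker ψ)` and `ψ(L) / ψ(ker φ)` are
isomorphic to `L / (ker φ ⊔ ker ψ)`.

Since `x·(gh) = (x·g)·h`, restriction is an anti-homomorphism on `G`; it becomes a
homomorphism on the subgroup `L.op` of `Gᵐᵒᵖ`, which is where we work.
-/

open MulOpposite

/-- The set of permutations of `U` arising as restrictions to `U` of elements of the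
subgroup `S ≤ G` which map `U` onto itself; it is a subgroup of `Sym(U)`. -/
def restrictedImage {G X : Type*} [Group G] [MulAction Gᵐᵒᵖ X] (U : Set X)
    (S : Subgroup G) : Subgroup (Equiv.Perm ↥U) where
  carrier := {σ : Equiv.Perm ↥U | ∃ h ∈ S, (fun x : X => op h • x) '' U = U ∧
    ∀ x : ↥U, (σ x : X) = op h • (x : X)}
  one_mem' := ⟨1, S.one_mem, by simp, by intro x; simp⟩
  mul_mem' := by
    rintro σ τ ⟨a, haS, haU, ha⟩ ⟨b, hbS, hbU, hb⟩
    refine ⟨b * a, S.mul_mem hbS haS, ?_, ?_⟩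
    · have h1 : (fun x : X => op (b * a) • x)
          = (fun x : X => op a • x) ∘ (fun x : X => op b • x) := by
        funext x; simp [op_mul, mul_smul]
      rw [h1, Set.image_comp, hbU, haU]
    · intro x
      have h2 : (σ * τ) x = σ (τ x) := rfl
      rw [h2, ha (τ x), hb x]
      simp [op_mul, mul_smul]
  inv_mem' := by
    rintro σ ⟨a, haS, haU, ha⟩
    refine ⟨a⁻¹, S.inv_mem haS, ?_, ?_⟩
    · have h2 : (fun x : X => op a⁻¹ • x) '' ((fun x : X => op a • x) '' U) = U := by
        rw [← Set.image_comp]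
        have h3 : ((fun x : X => op a⁻¹ • x) ∘ (fun x : X => op a • x)) = id := by
          funext x; simp [op_inv]
        rw [h3, Set.image_id]
      rw [haU] at h2; exact h2
    · intro x
      have h4 : (σ (σ⁻¹ x) : X) = op a • ((σ⁻¹ x : ↥U) : X) := ha (σ⁻¹ x)
      have h5 : σ (σ⁻¹ x) = x := Equiv.apply_symm_apply σ x
      rw [h5] at h4
      show ((σ⁻¹ x : ↥U) : X) = op a⁻¹ • (x : X)
      rw [h4, op_inv, inv_smul_smul]

namespace MonoidHom

variable {L P Q : Type*} [Group L] [Group P] [Group Q]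

theorem map_subgroupOf_range (φ : L →* P) (N : Subgroup L) :
    (N.map φ).subgroupOf φ.range = N.map φ.rangeRestrict := by
  ext ⟨p, hp⟩
  simp [Subgroup.mem_subgroupOf, Subtype.ext_iff]

instance normal_map_subgroupOf_range (φ : L →* P) (N : Subgroup L) [N.Normal] :
    ((N.map φ).subgroupOf φ.range).Normal := by
  rw [map_subgroupOf_range]
  exact Subgroup.Normal.map ‹_› _ φ.rangeRestrict_surjective

theorem ker_mk'_comp_rangeRestrict (φ : L →* P) (N : Subgroup L) [N.Normal] :
    ((QuotientGroup.mk' ((N.map φ).subgroupOf φ.range)).comp φ.rangeRestrict).ker =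
      N ⊔ φ.ker := by
  rw [← Subgroup.comap_map_eq, ← MonoidHom.comap_ker, QuotientGroup.ker_mk',
    Subgroup.subgroupOf, Subgroup.comap_comap, subtype_comp_rangeRestrict]

noncomputable def quotientSupKerEquivRangeQuotient (φ : L →* P) (N : Subgroup L) [N.Normal] :
    L ⧸ (N ⊔ φ.ker) ≃* φ.range ⧸ (N.map φ).subgroupOf φ.range :=
  (QuotientGroup.quotientMulEquivOfEq (ker_mk'_comp_rangeRestrict φ N).symm).trans
    (QuotientGroup.quotientKerEquivOfSurjective _
      ((QuotientGroup.mk'_surjective _).comp φ.rangeRestrict_surjective))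

noncomputable def rangeQuotientMapKerEquiv (φ : L →* P) (ψ : L →* Q) :
    φ.range ⧸ (ψ.ker.map φ).subgroupOf φ.range ≃*
      ψ.range ⧸ (φ.ker.map ψ).subgroupOf ψ.range :=
  (quotientSupKerEquivRangeQuotient φ ψ.ker).symm.trans
    ((QuotientGroup.quotientMulEquivOfEq (sup_comm _ _)).trans
      (quotientSupKerEquivRangeQuotient ψ φ.ker))

end MonoidHom

open MulAction Pointwise

namespace Subgroup

variable {M X : Type*} [Group M] [MulAction M X]

def restrictPerm (K : Subgroup M) (V : Set X) (hK : K ≤ stabilizer M V) :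
    K →* Equiv.Perm V :=
  (toPermHom (stabilizer M V) V).comp (inclusion hK)

@[simp]
theorem restrictPerm_apply_coe (K : Subgroup M) (V : Set X) (hK : K ≤ stabilizer M V) (k : K)
    (x : V) : (K.restrictPerm V hK k x : X) = (k : M) • (x : X) := rfl

theorem ker_restrictPerm (K : Subgroup M) (V : Set X) (hK : K ≤ stabilizer M V) :
    (K.restrictPerm V hK).ker = (fixingSubgroup M V).subgroupOf K := by
  ext k
  simp [mem_subgroupOf, mem_fixingSubgroup_iff, Equiv.ext_iff, Subtype.ext_iff]

end Subgroup

section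

variable {G X : Type*} [Group G] [MulAction Gᵐᵒᵖ X]

theorem op_setStabilizer (V : Set X) : (setStabilizer G V).op = stabilizer Gᵐᵒᵖ V := by
  ext k
  simp [mem_stabilizer_iff, setStabilizer, ← Set.image_smul]

theorem op_pointwiseStabilizer (A : Set X) :
    (pointwiseStabilizer G A).op = fixingSubgroup Gᵐᵒᵖ A := by
  ext k
  simp [mem_fixingSubgroup_iff, pointwiseStabilizer]

theorem rigidStabilizer_compl (V : Set X) : rigidStabilizer G Vᶜ = pointwiseStabilizer G V := by
  rw [rigidStabilizer, compl_compl]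

theorem setStabilizer_compl (V : Set X) : setStabilizer G Vᶜ = setStabilizer G V := by
  rw [← Subgroup.op_inj, op_setStabilizer, op_setStabilizer, stabilizer_compl]

theorem pointwiseStabilizer_le_setStabilizer (A : Set X) :
    pointwiseStabilizer G A ≤ setStabilizer G A := by
  rw [← Subgroup.op_le_op_iff, op_pointwiseStabilizer, op_setStabilizer]
  exact fixingSubgroup_le_stabilizer _ _

theorem restrictedImage_eq_map {V : Set X} {S N : Subgroup G}
    (hS : S.op ≤ stabilizer Gᵐᵒᵖ V) (hN : N ≤ S) :
    restrictedImage V N = (N.op.subgroupOf S.op).map (S.op.restrictPerm V hS) := by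
  ext σ
  constructor
  · rintro ⟨h, hhN, -, hσ⟩
    exact ⟨⟨op h, hN hhN⟩, hhN, Equiv.ext fun x => Subtype.ext (hσ x).symm⟩
  · rintro ⟨k, hk, rfl⟩
    refine ⟨k.1.unop, hk, ?_, fun x => rfl⟩
    simpa [Set.image_smul] using hS k.2

theorem restrictedImage_eq_range {V : Set X} {S : Subgroup G}
    (hS : S.op ≤ stabilizer Gᵐᵒᵖ V) :
    restrictedImage V S = (S.op.restrictPerm V hS).range := by
  rw [restrictedImage_eq_map hS le_rfl, Subgroup.subgroupOf_self, ← MonoidHom.range_eq_map]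

theorem inf_pointwiseStabilizer_op_subgroupOf {H S : Subgroup G} (hSH : S ≤ H) (A : Set X) :
    (H ⊓ pointwiseStabilizer G A).op.subgroupOf S.op =
      (fixingSubgroup Gᵐᵒᵖ A).subgroupOf S.op := by
  rw [Subgroup.op_inf, op_pointwiseStabilizer]
  ext k
  simpa [Subgroup.mem_subgroupOf] using fun _ => hSH k.2

end

theorem restriction_quotient_iso_general
    {G X : Type*} [Group G] [MulAction Gᵐᵒᵖ X]
    (U : Set X) (H : Subgroup G) :
    restrictedImage Uᶜ (H ⊓ rigidStabilizer G Uᶜ)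
        ≤ restrictedImage Uᶜ (H ⊓ setStabilizer G U) ∧
    ((restrictedImage Uᶜ (H ⊓ rigidStabilizer G Uᶜ)).subgroupOf
        (restrictedImage Uᶜ (H ⊓ setStabilizer G U))).Normal ∧
    restrictedImage U (H ⊓ rigidStabilizer G U)
        ≤ restrictedImage U (H ⊓ setStabilizer G U) ∧
    ((restrictedImage U (H ⊓ rigidStabilizer G U)).subgroupOf
        (restrictedImage U (H ⊓ setStabilizer G U))).Normal ∧
    ∀ [_h₁ : ((restrictedImage Uᶜ (H ⊓ rigidStabilizer G Uᶜ)).subgroupOf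
        (restrictedImage Uᶜ (H ⊓ setStabilizer G U))).Normal]
      [_h₂ : ((restrictedImage U (H ⊓ rigidStabilizer G U)).subgroupOf
        (restrictedImage U (H ⊓ setStabilizer G U))).Normal],
      Nonempty
        ((↥(restrictedImage Uᶜ (H ⊓ setStabilizer G U)) ⧸
            (restrictedImage Uᶜ (H ⊓ rigidStabilizer G Uᶜ)).subgroupOf
              (restrictedImage Uᶜ (H ⊓ setStabilizer G U))) ≃*
         (↥(restrictedImage U (H ⊓ setStabilizer G U)) ⧸
            (restrictedImage U (H ⊓ rigidStabilizer G U)).subgroupOf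
              (restrictedImage U (H ⊓ setStabilizer G U)))) := by
  set S := H ⊓ setStabilizer G U
  have hSU : S.op ≤ stabilizer Gᵐᵒᵖ U := by
    rw [Subgroup.op_inf, op_setStabilizer]
    exact inf_le_right
  have hSUc : S.op ≤ stabilizer Gᵐᵒᵖ Uᶜ := (stabilizer_compl _ _).ge.trans' hSU
  have hAS : H ⊓ rigidStabilizer G Uᶜ ≤ S := by
    rw [rigidStabilizer_compl]
    exact inf_le_inf_left H (pointwiseStabilizer_le_setStabilizer U)
  have hBS : H ⊓ rigidStabilizer G U ≤ S := inf_le_inf_left H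
    ((pointwiseStabilizer_le_setStabilizer Uᶜ).trans_eq (setStabilizer_compl U))
  have hAker :
      (H ⊓ rigidStabilizer G Uᶜ).op.subgroupOf S.op = (S.op.restrictPerm U hSU).ker := by
    rw [Subgroup.ker_restrictPerm, rigidStabilizer_compl,
      inf_pointwiseStabilizer_op_subgroupOf inf_le_left]
  have hBker :
      (H ⊓ rigidStabilizer G U).op.subgroupOf S.op = (S.op.restrictPerm Uᶜ hSUc).ker := by
    rw [Subgroup.ker_restrictPerm, rigidStabilizer,
      inf_pointwiseStabilizer_op_subgroupOf inf_le_left]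
  rw [restrictedImage_eq_map hSUc hAS, restrictedImage_eq_map hSU hBS, hAker, hBker,
    restrictedImage_eq_range hSUc, restrictedImage_eq_range hSU]
  exact ⟨Subgroup.map_le_range _ _, inferInstance, Subgroup.map_le_range _ _, inferInstance,
    ⟨MonoidHom.rangeQuotientMapKerEquiv _ _⟩⟩

/-- **Fact 3.2.** Let `G` be a countable group acting faithfully by homeomorphisms on a
second countable Hausdorff space `X` (the right action is encoded as a left action of
`Gᵐᵒᵖ`, so `x·g = op g • x`), `U ⊆ X` open, `H ≤ G`, and `L = {h ∈ H : U·h = U}`.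
Then the restriction `ρ_{Uᶜ}(R_H(Uᶜ))` is normal in `ρ_{Uᶜ}(L)`, the restriction
`ρ_U(R_H(U))` is normal in `ρ_U(L)`, and the corresponding quotients are isomorphic;
here `ρ_U(S)` is formalized as `restrictedImage U (H ⊓ S)`, the group of restrictions
to `U` of the elements of `H ⊓ S` mapping `U` onto itself. -/
theorem restriction_quotient_iso
    {G X : Type*} [Group G] [Countable G] [TopologicalSpace X]
    [SecondCountableTopology X] [T2Space X] [MulAction Gᵐᵒᵖ X]
    (hcont : ∀ g : G, Continuous fun x : X => op g • x)
    (hfaith : ∀ g : G, (∀ x : X, op g • x = x) → g = 1)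
    (U : Set X) (hU : IsOpen U) (H : Subgroup G) :
    restrictedImage Uᶜ (H ⊓ rigidStabilizer G Uᶜ)
        ≤ restrictedImage Uᶜ (H ⊓ setStabilizer G U) ∧
    ((restrictedImage Uᶜ (H ⊓ rigidStabilizer G Uᶜ)).subgroupOf
        (restrictedImage Uᶜ (H ⊓ setStabilizer G U))).Normal ∧
    restrictedImage U (H ⊓ rigidStabilizer G U)
        ≤ restrictedImage U (H ⊓ setStabilizer G U) ∧
    ((restrictedImage U (H ⊓ rigidStabilizer G U)).subgroupOf
        (restrictedImage U (H ⊓ setStabilizer G U))).Normal ∧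
    ∀ [_h₁ : ((restrictedImage Uᶜ (H ⊓ rigidStabilizer G Uᶜ)).subgroupOf
        (restrictedImage Uᶜ (H ⊓ setStabilizer G U))).Normal]
      [_h₂ : ((restrictedImage U (H ⊓ rigidStabilizer G U)).subgroupOf
        (restrictedImage U (H ⊓ setStabilizer G U))).Normal],
      Nonempty
        ((↥(restrictedImage Uᶜ (H ⊓ setStabilizer G U)) ⧸
            (restrictedImage Uᶜ (H ⊓ rigidStabilizer G Uᶜ)).subgroupOf
              (restrictedImage Uᶜ (H ⊓ setStabilizer G U))) ≃*
         (↥(restrictedImage U (H ⊓ setStabilizer G U)) ⧸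
            (restrictedImage U (H ⊓ rigidStabilizer G U)).subgroupOf
              (restrictedImage U (H ⊓ setStabilizer G U)))) :=
  restriction_quotient_iso_general U H
end

section
/- Let G be a group acting faithfully on the right by homeomorphisms on a Hausdorff topological space X without isolated points, and suppose R_G(V) ≠ {1} for every nonempty open V ⊆ X. Then for every nonempty open U ⊆ X the rigid stabilizer R_G(U) has the infinite conjugacy class property: for every γ ∈ R_G(U) with γ ≠ 1, the set of conjugates {g⁻¹γg : g ∈ R_G(U)} is infinite. -/
/-!
A nontrivial `γ ∈ R_G(U)` moves some point `x ∈ U`, so by continuity some nonempty open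
`V ⊆ U` is moved off itself by `γ`. An element of `R_G(V)` commuting with `γ` then fixes `V·γ`,
hence fixes `V`, hence is trivial; so `g ↦ g⁻¹γg` is injective on `R_G(V) ≤ R_G(U)`.
Finally `R_G(V)` is infinite: were it finite, removing one moved point of each of its
nontrivial elements from `V` would leave a nonempty open set with trivial rigid stabilizer.
-/

open MulOpposite

section RigidStabilizer

variable {G X : Type*} [Group G] [MulAction Gᵐᵒᵖ X]

lemma rigidStabilizer_mono {U V : Set X} (h : U ⊆ V) :
    rigidStabilizer G U ≤ rigidStabilizer G V :=
  fun _ hg x hx => hg x (fun hxU => hx (h hxU))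

lemma mem_of_mem_rigidStabilizer_of_smul_ne {U : Set X} {g : G} {x : X}
    (hg : g ∈ rigidStabilizer G U) (hx : op g • x ≠ x) : x ∈ U :=
  of_not_not fun hxU => hx (hg x hxU)

lemma exists_smul_ne_of_ne_one (hfaith : ∀ g : G, (∀ x : X, op g • x = x) → g = 1)
    {g : G} (hg : g ≠ 1) : ∃ x : X, op g • x ≠ x := by
  by_contra! h
  exact hg (hfaith g h)

lemma eq_one_of_mem_rigidStabilizer_of_commute
    (hfaith : ∀ g : G, (∀ x : X, op g • x = x) → g = 1)
    {V : Set X} {γ s : G} (hV : ∀ y ∈ V, op γ • y ∉ V)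
    (hs : s ∈ rigidStabilizer G V) (hcomm : Commute γ s) : s = 1 := by
  refine hfaith s fun y => ?_
  by_cases hy : y ∈ V
  · apply smul_left_cancel (op γ)
    calc op γ • op s • y = op (s * γ) • y := by rw [op_mul, mul_smul]
      _ = op (γ * s) • y := by rw [hcomm.eq]
      _ = op s • op γ • y := by rw [op_mul, mul_smul]
      _ = op γ • y := hs _ (hV y hy)
  · exact hs y hy

lemma injOn_conj_rigidStabilizer
    (hfaith : ∀ g : G, (∀ x : X, op g • x = x) → g = 1)
    {V : Set X} {γ : G} (hV : ∀ y ∈ V, op γ • y ∉ V) :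
    Set.InjOn (fun g => g⁻¹ * γ * g) (rigidStabilizer G V) := by
  intro g hg h hh hconj
  have hcomm : Commute γ (g * h⁻¹) := by
    have hconj : g⁻¹ * γ * g = h⁻¹ * γ * h := hconj
    calc γ * (g * h⁻¹) = g * (g⁻¹ * γ * g) * h⁻¹ := by group
      _ = g * (h⁻¹ * γ * h) * h⁻¹ := by rw [hconj]
      _ = g * h⁻¹ * γ := by group
  exact mul_inv_eq_one.mp <| eq_one_of_mem_rigidStabilizer_of_commute hfaith hV
    (mul_mem hg (inv_mem hh)) hcomm

variable [TopologicalSpace X]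

lemma rigidStabilizer_infinite [T1Space X]
    (hfaith : ∀ g : G, (∀ x : X, op g • x = x) → g = 1)
    (hnoiso : ∀ x : X, ¬ IsOpen ({x} : Set X))
    (hnontriv : ∀ V : Set X, IsOpen V → V.Nonempty → rigidStabilizer G V ≠ ⊥)
    {V : Set X} (hV : IsOpen V) (hVne : V.Nonempty) :
    (rigidStabilizer G V : Set G).Infinite := by
  intro hfin
  obtain ⟨x, hx⟩ := hVne
  have hVinf : V.Infinite := fun hVfin =>
    hnoiso x (isOpen_singleton_of_finite_mem_nhds x (hV.mem_nhds hx) hVfin)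
  have : Nonempty X := ⟨x⟩
  choose! p hp using fun (g : G) (hg : g ≠ 1) => exists_smul_ne_of_ne_one (X := X) hfaith hg
  set W := V \ p '' (rigidStabilizer G V : Set G)
  have hWopen : IsOpen W := hV.sdiff (hfin.image p).isClosed
  have hWne : W.Nonempty := (hVinf.sdiff (hfin.image p)).nonempty
  obtain ⟨⟨g, hgW⟩, hg1⟩ := Subgroup.ne_bot_iff_exists_ne_one.mp (hnontriv W hWopen hWne)
  have hgV : g ∈ rigidStabilizer G V := rigidStabilizer_mono Set.sdiff_subset hgW
  have hpW : p g ∈ W := mem_of_mem_rigidStabilizer_of_smul_ne hgW (hp g (by simpa using hg1))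
  exact hpW.2 ⟨g, hgV, rfl⟩

end RigidStabilizer

lemma exists_isOpen_mem_subset_forall_apply_notMem {X : Type*} [TopologicalSpace X]
    [T2Space X] {f : X → X} (hf : Continuous f) {x : X} (hx : f x ≠ x) {U : Set X}
    (hU : U ∈ nhds x) : ∃ V, IsOpen V ∧ x ∈ V ∧ V ⊆ U ∧ ∀ y ∈ V, f y ∉ V := by
  obtain ⟨A, B, hA, hB, hxA, hfxB, hAB⟩ := t2_separation hx.symm
  obtain ⟨U', hU'U, hU', hxU'⟩ := mem_nhds_iff.mp hU
  refine ⟨U' ∩ A ∩ f ⁻¹' B, (hU'.inter hA).inter (hB.preimage hf), ⟨⟨hxU', hxA⟩, hfxB⟩,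
    fun y hy => hU'U hy.1.1, fun y hy hfy => ?_⟩
  exact hAB.ne_of_mem hfy.1.2 hy.2 rfl

/-- If a group `G` acts faithfully by homeomorphisms on a Hausdorff space `X` without
isolated points (the right action is encoded as a left action of `Gᵐᵒᵖ`, so
`x·g = op g • x`), and every rigid stabilizer of a nonempty open set is nontrivial,
then every rigid stabilizer `R_G(U)` of a nonempty open `U` is ICC: every `γ ≠ 1` in
`R_G(U)` has infinitely many `R_G(U)`-conjugates. -/
theorem rigidStabilizer_icc
    {G X : Type*} [Group G] [TopologicalSpace X] [T2Space X] [MulAction Gᵐᵒᵖ X]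
    (hcont : ∀ g : G, Continuous fun x : X => op g • x)
    (hfaith : ∀ g : G, (∀ x : X, op g • x = x) → g = 1)
    (hnoiso : ∀ x : X, ¬ IsOpen ({x} : Set X))
    (hnontriv : ∀ V : Set X, IsOpen V → V.Nonempty → rigidStabilizer G V ≠ ⊥) :
    ∀ U : Set X, IsOpen U → U.Nonempty →
      ∀ γ ∈ rigidStabilizer G U, γ ≠ 1 →
        {c : G | ∃ g ∈ rigidStabilizer G U, c = g⁻¹ * γ * g}.Infinite := by
  intro U hU _ γ hγ hγ1
  obtain ⟨x, hx⟩ := exists_smul_ne_of_ne_one hfaith hγ1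
  obtain ⟨V, hVopen, hxV, hVU, hVγ⟩ := exists_isOpen_mem_subset_forall_apply_notMem
    (hcont γ) hx (hU.mem_nhds (mem_of_mem_rigidStabilizer_of_smul_ne hγ hx))
  refine Set.infinite_of_injOn_mapsTo (injOn_conj_rigidStabilizer hfaith hVγ) ?_
    (rigidStabilizer_infinite hfaith hnoiso hnontriv hVopen ⟨x, hxV⟩)
  exact fun g hg => ⟨g, rigidStabilizer_mono hVU hg, rfl⟩
end

section
/- Let G be a group acting faithfully on the right by homeomorphisms on a Hausdorff topological space X, and let U ⊆ X be an open set with R_G(U) ≠ {1}. If x ∈ U is a point such that the orbit {x·g : g ∈ G, U·g = U} is dense in U, then x is not a fixed point of R_G(U): there exists h ∈ R_G(U) with x·h ≠ x. -/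
open MulOpposite

/-! If `x` were fixed by `R_G(U)`, then so would be every point `x·g` with `U·g = U`, because
`g R_G(U) g⁻¹ ⊆ R_G(U)`. The fixed-point set of a nontrivial `h ∈ R_G(U)` is closed in the
Hausdorff space `X`, so it would contain the closure of that orbit, hence `U`; as `h` also fixes
`X \ U`, faithfulness would force `h = 1`. -/

section RigidStabilizer

variable {G X : Type*} [Group G] [MulAction Gᵐᵒᵖ X] {U : Set X} {g h : G}

theorem smul_mem_compl_of_image_eq (hg : (fun z : X => op g • z) '' U = U) {z : X}
    (hz : z ∈ Uᶜ) : op g • z ∈ Uᶜ := by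
  rintro hgz
  rw [← hg] at hgz
  obtain ⟨u, hu, hgu⟩ := hgz
  exact hz (MulAction.injective (op g) hgu ▸ hu)

theorem conj_mem_rigidStabilizer (hg : (fun z : X => op g • z) '' U = U)
    (hh : h ∈ rigidStabilizer G U) : g * h * g⁻¹ ∈ rigidStabilizer G U := by
  intro z hz
  simp only [op_mul, op_inv, mul_smul]
  rw [hh _ (smul_mem_compl_of_image_eq hg hz), inv_smul_smul]

theorem smul_smul_eq_of_forall_rigidStabilizer_fixed {x : X}
    (hfix : ∀ k ∈ rigidStabilizer G U, op k • x = x)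
    (hg : (fun z : X => op g • z) '' U = U) (hh : h ∈ rigidStabilizer G U) :
    op h • op g • x = op g • x := by
  have hconj := hfix _ (conj_mem_rigidStabilizer hg hh)
  simp only [op_mul, op_inv, mul_smul] at hconj
  rwa [inv_smul_eq_iff] at hconj

theorem eq_one_of_mem_rigidStabilizer_of_forall_fixed
    (hfaith : ∀ g : G, (∀ x : X, op g • x = x) → g = 1)
    (hh : h ∈ rigidStabilizer G U) (hU : ∀ z ∈ U, op h • z = z) : h = 1 :=
  hfaith h fun z => (em (z ∈ U)).elim (hU z) (hh z)

end RigidStabilizer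

theorem not_fixed_of_dense_orbit_general
    {G X : Type*} [Group G] [TopologicalSpace X] [T2Space X] [MulAction Gᵐᵒᵖ X]
    (hcont : ∀ g : G, Continuous fun x : X => op g • x)
    (hfaith : ∀ g : G, (∀ x : X, op g • x = x) → g = 1)
    (U : Set X) (hnontriv : rigidStabilizer G U ≠ ⊥)
    (x : X)
    (hdense : U ⊆ closure {y : X | ∃ g : G,
      (fun z : X => op g • z) '' U = U ∧ y = op g • x}) :
    ∃ h ∈ rigidStabilizer G U, op h • x ≠ x := by
  by_contra! hfix
  obtain ⟨h, hhR, hh1⟩ := (rigidStabilizer G U).bot_or_exists_ne_one.resolve_left hnontriv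
  have horbit : {y : X | ∃ g : G, (fun z : X => op g • z) '' U = U ∧ y = op g • x}
      ⊆ {z | op h • z = z} := by
    rintro _ ⟨g, hg, rfl⟩
    exact smul_smul_eq_of_forall_rigidStabilizer_fixed hfix hg hhR
  have hclosed : IsClosed {z : X | op h • z = z} := isClosed_eq (hcont h) continuous_id
  exact hh1 <| eq_one_of_mem_rigidStabilizer_of_forall_fixed hfaith hhR fun z hz =>
    closure_minimal horbit hclosed (hdense hz)

/-- (Remark 3.5.) If a group `G` acts faithfully by homeomorphisms on a Hausdorff space
`X` (encoded as a left action of `Gᵐᵒᵖ`, so `x·g = op g • x`), `U` is open with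
`R_G(U) ≠ {1}`, and `x ∈ U` has dense orbit in `U` under the setwise stabilizer
`{g : U·g = U}`, then `x` is not fixed by `R_G(U)`. -/
theorem not_fixed_of_dense_orbit
    {G X : Type*} [Group G] [TopologicalSpace X] [T2Space X] [MulAction Gᵐᵒᵖ X]
    (hcont : ∀ g : G, Continuous fun x : X => op g • x)
    (hfaith : ∀ g : G, (∀ x : X, op g • x = x) → g = 1)
    (U : Set X) (hU : IsOpen U) (hnontriv : rigidStabilizer G U ≠ ⊥)
    (x : X) (hx : x ∈ U)
    (hdense : U ⊆ closure {y : X | ∃ g : G,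
      (fun z : X => op g • z) '' U = U ∧ y = op g • x}) :
    ∃ h ∈ rigidStabilizer G U, op h • x ≠ x :=
  not_fixed_of_dense_orbit_general hcont hfaith U hnontriv x hdense
end

section
/- Let G be a group acting on the right by homeomorphisms on a Cantor set X, and assume the action is compressible: for every clopen set U ⊊ X there exist g₁, g₂ ∈ G such that (U·g₁) ∪ (U·g₂) ⊆ U and (U·g₁) ∩ (U·g₂) = ∅. Then every G-invariant probability measure ν on F(X) satisfies ν({C ∈ F(X) : C ≠ ∅ and C ≠ X}) = 0; that is, ν is concentrated on the two points ∅ and X of F(X). -/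
open MulOpposite MeasureTheory

/-- The space `F(X)` of closed subsets of `X`. -/
def ClosedSubsets (X : Type*) [TopologicalSpace X] : Type _ := {C : Set X // IsClosed C}

/-- The σ-algebra on `F(X)` generated by the sets `{C : C ⊆ U}` for `U` clopen
(for a Cantor set `X` this is the Borel σ-algebra of the Vietoris topology). -/
instance closedSubsetsMeasurableSpace (X : Type*) [TopologicalSpace X] :
    MeasurableSpace (ClosedSubsets X) :=
  MeasurableSpace.generateFrom
    {S : Set (ClosedSubsets X) | ∃ U : Set X, IsClopen U ∧
      S = {C : ClosedSubsets X | C.1 ⊆ U}}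

/-- The action of `g ∈ G` on `F(X)`, `C ↦ C·g` (the image of a closed set under the
homeomorphism `x ↦ x·g` is closed since `X` is compact Hausdorff). -/
def closedImage {G X : Type*} [Group G] [TopologicalSpace X] [CompactSpace X] [T2Space X]
    [MulAction Gᵐᵒᵖ X] (hcont : ∀ g : G, Continuous fun x : X => op g • x) (g : G)
    (C : ClosedSubsets X) : ClosedSubsets X :=
  ⟨(fun x : X => op g • x) '' C.1, ((C.2.isCompact).image (hcont g)).isClosed⟩

/-! If `g₁, g₂` compress a proper clopen set `U`, the translates `U·g₁g₂ⁿ` (`n ∈ ℕ`) are pairwise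
disjoint clopen sets, so the events `{C ≠ ∅ : C ⊆ U·g₁g₂ⁿ}` are pairwise disjoint and, by
invariance, all have the same measure as `{C ≠ ∅ : C ⊆ U}`; in a probability space that measure
must vanish. A nonempty closed `C ≠ X` misses a clopen neighbourhood of some point, hence lies in
such an event for some proper clopen `U`, and a compact metrizable space has only countably many
clopen sets. -/

open Pointwise Function

theorem IsClopen.smul {M α : Type*} [Group M] [MulAction M α] [TopologicalSpace α]
    [ContinuousConstSMul M α] {s : Set α} (hs : IsClopen s) (c : M) : IsClopen (c • s) :=
  ⟨hs.1.smul c, hs.2.smul c⟩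

theorem exists_isClopen_superset_ne_univ {X : Type*} [TopologicalSpace X] [CompactSpace X]
    [T2Space X] [TotallyDisconnectedSpace X] {C : Set X} (hC : IsClosed C) (hne : C ≠ Set.univ) :
    ∃ U, IsClopen U ∧ U ≠ Set.univ ∧ C ⊆ U := by
  obtain ⟨x, hx⟩ := (Set.ne_univ_iff_exists_notMem C).1 hne
  obtain ⟨V, hV, hxV, hVC⟩ :=
    isTopologicalBasis_isClopen.exists_subset_of_mem_open (Set.mem_compl hx) hC.isOpen_compl
  exact ⟨Vᶜ, hV.compl, (Set.ne_univ_iff_exists_notMem _).2 ⟨x, not_not.2 hxV⟩,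
    Set.subset_compl_comm.1 hVC⟩

theorem countable_setOf_isClopen {X : Type*} [TopologicalSpace X] [CompactSpace X] [T2Space X]
    [TotallyDisconnectedSpace X] [SecondCountableTopology X] :
    {U : Set X | IsClopen U}.Countable := by
  have := TopologicalSpace.Clopens.countable_iff_secondCountable.2 ‹SecondCountableTopology X›
  exact (Set.countable_range (SetLike.coe : TopologicalSpace.Clopens X → Set X)).mono
    fun U hU => Set.mem_range_self (⟨U, hU⟩ : TopologicalSpace.Clopens X)

theorem MeasureTheory.eq_zero_of_pairwise_disjoint_of_measure_eq {α ι : Type*} [Infinite ι]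
    [MeasurableSpace α] {μ : Measure α} [IsFiniteMeasure μ] {s : ι → Set α} {c : ENNReal}
    (hs : ∀ i, MeasurableSet (s i)) (hd : Pairwise (Disjoint on s)) (hc : ∀ i, μ (s i) = c) :
    c = 0 := by
  by_contra hc₀
  have htop : ∑' i, μ (s i) = ⊤ := by
    simp only [hc]
    exact ENNReal.tsum_const_eq_top_of_ne_zero hc₀
  have hle : ∑' i, μ (s i) ≤ μ Set.univ :=
    (tsum_meas_le_meas_iUnion_of_disjoint μ hs hd).trans (measure_mono (Set.subset_univ _))
  exact measure_ne_top μ Set.univ (top_le_iff.1 (htop ▸ hle))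

section Compression

variable {M α : Type*} [Group M] [MulAction M α] {a b : M} {U : Set α}

theorem pow_mul_smul_subset (ha : a • U ⊆ U) (hb : b • U ⊆ U) (n : ℕ) : (b ^ n * a) • U ⊆ U := by
  induction n with
  | zero => simpa using ha
  | succ n ih =>
    rw [pow_succ', mul_assoc, mul_smul]
    exact (Set.smul_set_mono ih).trans hb

theorem pairwise_disjoint_pow_mul_smul (ha : a • U ⊆ U) (hb : b • U ⊆ U)
    (hab : Disjoint (a • U) (b • U)) : Pairwise (Disjoint on fun n : ℕ => (b ^ n * a) • U) := by
  refine (pairwise_disjoint_on _).2 fun m n hmn => ?_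
  obtain ⟨k, rfl⟩ := Nat.exists_eq_add_of_lt hmn
  have hn : (b ^ (m + k + 1) * a) • U = b ^ m • b • (b ^ k * a) • U := by
    rw [← mul_smul, ← mul_smul, ← mul_assoc, ← pow_succ, ← pow_add, add_right_comm]
  rw [hn, mul_smul]
  exact (Set.disjoint_smul_set.2 hab).mono_right
    (Set.smul_set_mono (Set.smul_set_mono (pow_mul_smul_subset ha hb k)))

end Compression

namespace ClosedSubsets

variable {X : Type*} [TopologicalSpace X]

def nonemptyWithin (W : Set X) : Set (ClosedSubsets X) := {C | C.1.Nonempty ∧ C.1 ⊆ W}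

theorem disjoint_nonemptyWithin {V W : Set X} (h : Disjoint V W) :
    Disjoint (nonemptyWithin V) (nonemptyWithin W) :=
  Set.disjoint_left.2 fun _ ⟨⟨_, hx⟩, hV⟩ ⟨_, hW⟩ => Set.disjoint_left.1 h (hV hx) (hW hx)

theorem measurableSet_setOf_subset {U : Set X} (hU : IsClopen U) :
    MeasurableSet {C : ClosedSubsets X | C.1 ⊆ U} :=
  MeasurableSpace.measurableSet_generateFrom ⟨U, hU, rfl⟩

theorem measurableSet_nonemptyWithin {U : Set X} (hU : IsClopen U) :
    MeasurableSet (nonemptyWithin U) := by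
  have h : nonemptyWithin U = {C : ClosedSubsets X | C.1 ⊆ U} \ {C | C.1 ⊆ ∅} := by
    ext C
    simp [nonemptyWithin, Set.nonempty_iff_ne_empty, and_comm]
  rw [h]
  exact (measurableSet_setOf_subset hU).diff (measurableSet_setOf_subset isClopen_empty)

variable {G : Type*} [Group G] [CompactSpace X] [T2Space X] [MulAction Gᵐᵒᵖ X]
  {hcont : ∀ g : G, Continuous fun x : X => op g • x}

theorem preimage_closedImage_nonemptyWithin (g : G) (W : Set X) :
    closedImage hcont g⁻¹ ⁻¹' nonemptyWithin W = nonemptyWithin (op g • W) := by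
  ext C
  change ((fun x : X => op g⁻¹ • x) '' C.1).Nonempty ∧ (fun x : X => op g⁻¹ • x) '' C.1 ⊆ W ↔ _
  rw [Set.image_smul, Set.smul_set_nonempty, Set.smul_set_subset_iff_subset_inv_smul_set, op_inv,
    inv_inv]
  rfl

variable {ν : Measure (ClosedSubsets X)}

theorem measure_nonemptyWithin_smul
    (hνinv : ∀ g : G, ∀ S : Set (ClosedSubsets X), MeasurableSet S →
      ν (closedImage hcont g ⁻¹' S) = ν S) (m : Gᵐᵒᵖ) {W : Set X} (hW : IsClopen W) :
    ν (nonemptyWithin (m • W)) = ν (nonemptyWithin W) := by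
  rw [← op_unop m, ← preimage_closedImage_nonemptyWithin]
  exact hνinv _ _ (measurableSet_nonemptyWithin hW)

theorem measure_nonemptyWithin_eq_zero [IsFiniteMeasure ν]
    (hνinv : ∀ g : G, ∀ S : Set (ClosedSubsets X), MeasurableSet S →
      ν (closedImage hcont g ⁻¹' S) = ν S) {U : Set X} (hU : IsClopen U)
    {a b : Gᵐᵒᵖ} (ha : a • U ⊆ U) (hb : b • U ⊆ U) (hab : Disjoint (a • U) (b • U)) :
    ν (nonemptyWithin U) = 0 := by
  have : ContinuousConstSMul Gᵐᵒᵖ X := ⟨fun m => hcont m.unop⟩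
  exact eq_zero_of_pairwise_disjoint_of_measure_eq
    (s := fun n : ℕ => nonemptyWithin ((b ^ n * a) • U))
    (fun _ => measurableSet_nonemptyWithin (hU.smul _))
    ((pairwise_disjoint_pow_mul_smul ha hb hab).mono fun _ _ => disjoint_nonemptyWithin)
    fun _ => measure_nonemptyWithin_smul hνinv _ hU

end ClosedSubsets

theorem compressible_invariant_measure_trivial_general
    {G X : Type*} [Group G] [TopologicalSpace X] [CompactSpace X]
    [TopologicalSpace.MetrizableSpace X] [TotallyDisconnectedSpace X]
    [MulAction Gᵐᵒᵖ X]
    (hcont : ∀ g : G, Continuous fun x : X => op g • x)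
    (hcompr : ∀ U : Set X, IsClopen U → U ≠ Set.univ →
      ∃ g₁ g₂ : G,
        ((fun x : X => op g₁ • x) '' U) ∪ ((fun x : X => op g₂ • x) '' U) ⊆ U ∧
        ((fun x : X => op g₁ • x) '' U) ∩ ((fun x : X => op g₂ • x) '' U) = ∅)
    (ν : Measure (ClosedSubsets X)) [IsProbabilityMeasure ν]
    (hνinv : ∀ g : G, ∀ S : Set (ClosedSubsets X), MeasurableSet S →
      ν (closedImage hcont g ⁻¹' S) = ν S) :
    ν {C : ClosedSubsets X | C.1 ≠ ∅ ∧ C.1 ≠ Set.univ} = 0 := by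
  have hnull : ∀ U ∈ {U : Set X | IsClopen U ∧ U ≠ Set.univ}, ν (ClosedSubsets.nonemptyWithin U) = 0 := by
    rintro U ⟨hU, hne⟩
    obtain ⟨g₁, g₂, hsub, hdisj⟩ := hcompr U hU hne
    rw [Set.image_smul, Set.image_smul, Set.union_subset_iff] at hsub
    rw [Set.image_smul, Set.image_smul, ← Set.disjoint_iff_inter_eq_empty] at hdisj
    exact ClosedSubsets.measure_nonemptyWithin_eq_zero hνinv hU hsub.1 hsub.2 hdisj
  have hcount : {U : Set X | IsClopen U ∧ U ≠ Set.univ}.Countable :=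
    countable_setOf_isClopen.mono fun _ hU => hU.1
  refine measure_mono_null ?_ ((measure_biUnion_null_iff hcount).2 hnull)
  rintro C ⟨hne, hnu⟩
  obtain ⟨U, hU, hUnu, hCU⟩ := exists_isClopen_superset_ne_univ C.2 hnu
  exact Set.mem_biUnion ⟨hU, hUnu⟩ ⟨Set.nonempty_iff_ne_empty.2 hne, hCU⟩

/-- **Corollary 5.1 (key step).** Let `G` act by homeomorphisms on a Cantor set `X`
(the right action is encoded as a left action of `Gᵐᵒᵖ`, so `x·g = op g • x`), and
assume the action is compressible: every proper clopen `U` admits `g₁, g₂` with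
`U·g₁ ∪ U·g₂ ⊆ U` and `U·g₁ ∩ U·g₂ = ∅`.  Then every `G`-invariant probability measure
on `F(X)` is concentrated on `{∅, X}`. -/
theorem compressible_invariant_measure_trivial
    {G X : Type*} [Group G] [TopologicalSpace X] [Nonempty X] [CompactSpace X]
    [TopologicalSpace.MetrizableSpace X] [TotallyDisconnectedSpace X]
    [MulAction Gᵐᵒᵖ X]
    (hperf : ∀ x : X, ¬ IsOpen ({x} : Set X))
    (hcont : ∀ g : G, Continuous fun x : X => op g • x)
    (hcompr : ∀ U : Set X, IsClopen U → U ≠ Set.univ →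
      ∃ g₁ g₂ : G,
        ((fun x : X => op g₁ • x) '' U) ∪ ((fun x : X => op g₂ • x) '' U) ⊆ U ∧
        ((fun x : X => op g₁ • x) '' U) ∩ ((fun x : X => op g₂ • x) '' U) = ∅)
    (ν : Measure (ClosedSubsets X)) [IsProbabilityMeasure ν]
    (hνinv : ∀ g : G, ∀ S : Set (ClosedSubsets X), MeasurableSet S →
      ν (closedImage hcont g ⁻¹' S) = ν S) :
    ν {C : ClosedSubsets X | C.1 ≠ ∅ ∧ C.1 ≠ Set.univ} = 0 :=
  compressible_invariant_measure_trivial_general hcont hcompr ν hνinv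
end
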